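/- arXiv:1511.03798 — 14 statements merged into one kernel-verified Lean document; each statement's English description precedes it below -/
import Mathlib

section
/- Let H be a real inner product space. For all a, b ∈ H one has ⟪(1 + ‖a‖²)·a − (1 + ‖b‖²)·b, a − b⟫ ≥ ‖a − b‖². -/
/-! Splitting off the identity part leaves `‖a - b‖²` plus the monotonicity term of the cubic
map `a ↦ ‖a‖² • a`, which is a sum of nonnegative terms (no Cauchy–Schwarz needed). -/

section

variable {H : Type*} [NormedAddCommGroup H] [InnerProductSpace ℝ H]

theorem inner_norm_sq_smul_sub_norm_sq_smul (a b : H) :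
    inner ℝ (‖a‖ ^ 2 • a - ‖b‖ ^ 2 • b) (a - b)
      = ((‖a‖ ^ 2 - ‖b‖ ^ 2) ^ 2 + (‖a‖ ^ 2 + ‖b‖ ^ 2) * ‖a - b‖ ^ 2) / 2 := by
  simp only [inner_sub_left, inner_sub_right, real_inner_smul_left, real_inner_self_eq_norm_sq,
    norm_sub_sq_real, real_inner_comm a b]
  ring

theorem inner_norm_sq_smul_sub_norm_sq_smul_nonneg (a b : H) :
    0 ≤ inner ℝ (‖a‖ ^ 2 • a - ‖b‖ ^ 2 • b) (a - b) := by
  rw [inner_norm_sq_smul_sub_norm_sq_smul]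
  positivity

end

theorem monotonicity_property {H : Type*} [NormedAddCommGroup H] [InnerProductSpace ℝ H]
    (a b : H) :
    (inner ℝ ((1 + ‖a‖ ^ 2) • a - (1 + ‖b‖ ^ 2) • b) (a - b) : ℝ) ≥ ‖a - b‖ ^ 2 := by
  have split : (1 + ‖a‖ ^ 2) • a - (1 + ‖b‖ ^ 2) • b = (a - b) + (‖a‖ ^ 2 • a - ‖b‖ ^ 2 • b) := by
    simp only [add_smul, one_smul]
    abel
  rw [split, inner_add_left, real_inner_self_eq_norm_sq]
  linarith [inner_norm_sq_smul_sub_norm_sq_smul_nonneg a b]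
end

section
/- Let H be a real inner product space. For all a, b ∈ H one has ⟪(1 + ‖a‖²)·a − (1 + ‖b‖²)·b, a − b⟫ ≥ ‖a − b‖² + (1/2)(‖a‖² − ‖b‖²)² + (1/2)‖a‖²‖a − b‖². -/
/-!
Split `s • a - t • b` along `a - b` and `a + b`: since `⟪a + b, a - b⟫ = ‖a‖² - ‖b‖²`, the left side
equals `‖a - b‖² + ½(‖a‖² + ‖b‖²)‖a - b‖² + ½(‖a‖² - ‖b‖²)²`, and dropping `½‖b‖²‖a - b‖² ≥ 0`
gives the bound.
-/

section

variable {H : Type*} [NormedAddCommGroup H] [InnerProductSpace ℝ H]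

open scoped RealInnerProductSpace

theorem real_inner_add_sub_self (a b : H) : ⟪a + b, a - b⟫ = ‖a‖ ^ 2 - ‖b‖ ^ 2 := by
  rw [inner_add_left, inner_sub_right, inner_sub_right, real_inner_self_eq_norm_sq,
    real_inner_self_eq_norm_sq, real_inner_comm a b]
  ring

theorem real_inner_smul_sub_smul_sub (s t : ℝ) (a b : H) :
    ⟪s • a - t • b, a - b⟫ = (s + t) / 2 * ‖a - b‖ ^ 2 + (s - t) / 2 * (‖a‖ ^ 2 - ‖b‖ ^ 2) := by
  have hsplit : s • a - t • b = ((s + t) / 2) • (a - b) + ((s - t) / 2) • (a + b) := by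
    module
  rw [hsplit, inner_add_left, real_inner_smul_left, real_inner_smul_left,
    real_inner_self_eq_norm_sq, real_inner_add_sub_self]

end

theorem strengthened_monotonicity {H : Type*} [NormedAddCommGroup H] [InnerProductSpace ℝ H]
    (a b : H) :
    (inner ℝ ((1 + ‖a‖ ^ 2) • a - (1 + ‖b‖ ^ 2) • b) (a - b) : ℝ) ≥
      ‖a - b‖ ^ 2 + (1 / 2) * (‖a‖ ^ 2 - ‖b‖ ^ 2) ^ 2 + (1 / 2) * ‖a‖ ^ 2 * ‖a - b‖ ^ 2 := by
  rw [real_inner_smul_sub_smul_sub]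
  have hdropped : 0 ≤ ‖b‖ ^ 2 * ‖a - b‖ ^ 2 := by positivity
  linarith
end

section
/- Let H be a real inner product space. For all a, b ∈ H one has (‖a‖² − ‖b‖²)·⟪b, a − b⟫ ≥ (1/2)(‖a‖² − ‖b‖²)² − (1/2)‖a‖²‖a − b‖². -/
theorem norm_sq_sub_norm_sq_mul_inner_sub_eq {H : Type*} [NormedAddCommGroup H]
    [InnerProductSpace ℝ H] (a b : H) :
    (‖a‖ ^ 2 - ‖b‖ ^ 2) * inner ℝ b (a - b) =
      (1 / 2) * (‖a‖ ^ 2 - ‖b‖ ^ 2) ^ 2 - (1 / 2) * ‖a‖ ^ 2 * ‖a - b‖ ^ 2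
        + (1 / 2) * ‖b‖ ^ 2 * ‖a - b‖ ^ 2 := by
  rw [inner_sub_right, real_inner_self_eq_norm_sq, norm_sub_sq_real, real_inner_comm a b]
  ring

theorem key_intermediate_inequality {H : Type*} [NormedAddCommGroup H] [InnerProductSpace ℝ H]
    (a b : H) :
    (‖a‖ ^ 2 - ‖b‖ ^ 2) * (inner ℝ b (a - b) : ℝ) ≥
      (1 / 2) * (‖a‖ ^ 2 - ‖b‖ ^ 2) ^ 2 - (1 / 2) * ‖a‖ ^ 2 * ‖a - b‖ ^ 2 := by
  rw [norm_sq_sub_norm_sq_mul_inner_sub_eq]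
  exact le_add_of_nonneg_right (by positivity)
end

section
/- Let V be a finite-dimensional real inner product space, let A : V → V be a symmetric linear map (⟪A v, w⟫ = ⟪v, A w⟫ for all v, w ∈ V) with ⟪A v, v⟫ ≥ 0 for all v ∈ V, and let f : [0,∞) → V be continuous and bounded. Then for every u₀ ∈ V there exists a unique continuously differentiable function u : [0,∞) → V with u(0) = u₀ satisfying u'(t) + (1 + ⟪A u(t), u(t)⟫) · A u(t) = f(t) for all t ≥ 0. -/
/-!
Testing the equation against `u` gives `d/dt ‖u‖² = 2⟪f, u⟫ - 2(1 + ⟪Au, u⟫)⟪Au, u⟫ ≤ 2‖f‖‖u‖`,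
because `A` is positive semidefinite; Grönwall then bounds `‖u(t)‖` by `(‖u₀‖ + C) e^t` on
every interval `[0, T]`. The nonlinearity is smooth, hence Lipschitz on balls, so solutions are
unique. For existence on `[0, T]`, multiply the nonlinearity by a bump function equal to `1` on a
ball containing the a priori bound: the truncated field is globally Lipschitz, Picard–Lindelöf
applies, and the same bound shows that the truncation is never active. Solutions on `[0, T]` for
all `T` are compatible by uniqueness and glue to a global solution.
-/

open Set Metric NNReal Real Topology

section IntegralCurves

variable {E : Type*} [NormedAddCommGroup E] [NormedSpace ℝ E] {γ γ' : ℝ → E} {v : ℝ → E → E}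

lemma IsIntegralCurveOn.hasDerivWithinAt_Ici {a b t : ℝ} (hγ : IsIntegralCurveOn γ v (Icc a b))
    (ht : t ∈ Ico a b) : HasDerivWithinAt γ (v t (γ t)) (Ici t) t :=
  (hγ t (Ico_subset_Icc_self ht)).mono_of_mem_nhdsWithin (Icc_mem_nhdsGE_of_mem ht)

theorem IsIntegralCurveOn.eqOn_Icc {a b : ℝ}
    (hv : ∀ s : Set E, IsCompact s → ∃ K, ∀ t ∈ Ico a b, LipschitzOnWith K (v t) s)
    (hγ : IsIntegralCurveOn γ v (Icc a b)) (hγ' : IsIntegralCurveOn γ' v (Icc a b))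
    (ha : γ a = γ' a) : EqOn γ γ' (Icc a b) := by
  set s := γ '' Icc a b ∪ γ' '' Icc a b
  obtain ⟨K, hK⟩ := hv s <| (isCompact_Icc.image_of_continuousOn hγ.continuousOn).union
    (isCompact_Icc.image_of_continuousOn hγ'.continuousOn)
  exact ODE_solution_unique_of_mem_Icc_right (s := fun _ ↦ s) hK
    hγ.continuousOn (fun t ht ↦ hγ.hasDerivWithinAt_Ici ht)
    (fun t ht ↦ .inl (mem_image_of_mem _ (Ico_subset_Icc_self ht)))
    hγ'.continuousOn (fun t ht ↦ hγ'.hasDerivWithinAt_Ici ht)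
    (fun t ht ↦ .inr (mem_image_of_mem _ (Ico_subset_Icc_self ht))) ha

theorem exists_isIntegralCurveOn_Icc_of_lipschitzWith [CompleteSpace E] {a b : ℝ} (hab : a ≤ b)
    {K : ℝ≥0} {L : ℝ} (hlip : ∀ t ∈ Icc a b, LipschitzWith K (v t))
    (hcont : ∀ x, ContinuousOn (v · x) (Icc a b)) (hbdd : ∀ t ∈ Icc a b, ∀ x, ‖v t x‖ ≤ L)
    (x₀ : E) : ∃ γ : ℝ → E, γ a = x₀ ∧ IsIntegralCurveOn γ v (Icc a b) :=
  IsPicardLindelof.exists_eq_forall_mem_Icc_hasDerivWithinAt₀ (f := v)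
    (t₀ := ⟨a, left_mem_Icc.2 hab⟩) (x₀ := x₀) (a := L.toNNReal * (b - a).toNNReal) (L := L.toNNReal)
    { lipschitzOnWith := fun t ht ↦ (hlip t ht).lipschitzOnWith
      continuousOn := fun x _ ↦ hcont x
      norm_le := fun t ht x _ ↦ (hbdd t ht x).trans (le_coe_toNNReal L)
      mul_max_le := by
        rw [max_eq_left (by simpa using hab)]
        simp [Real.coe_toNNReal _ (sub_nonneg.2 hab)] }

theorem exists_isIntegralCurveOn_Ici_of_forall_Icc {a : ℝ} {x₀ : E}
    (hex : ∀ b, a ≤ b → ∃ γ : ℝ → E, γ a = x₀ ∧ IsIntegralCurveOn γ v (Icc a b))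
    (huniq : ∀ b γ γ', IsIntegralCurveOn γ v (Icc a b) → IsIntegralCurveOn γ' v (Icc a b) →
      γ a = γ' a → EqOn γ γ' (Icc a b)) :
    ∃ γ : ℝ → E, γ a = x₀ ∧ IsIntegralCurveOn γ v (Ici a) := by
  choose! sol hsol₀ hsol using hex
  have hagree : ∀ b b', a ≤ b → a ≤ b' → EqOn (sol b) (sol b') (Icc a (min b b')) :=
    fun b b' hb hb' ↦ huniq _ _ _ ((hsol b hb).mono (Icc_subset_Icc_right (min_le_left _ _)))
      ((hsol b' hb').mono (Icc_subset_Icc_right (min_le_right _ _)))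
      ((hsol₀ b hb).trans (hsol₀ b' hb').symm)
  set γ : ℝ → E := fun t ↦ sol (max a t + 1) t
  have hγ : ∀ b, a ≤ b → EqOn γ (sol b) (Icc a b) := fun b hb t ht ↦
    hagree _ _ (by linarith [le_max_left a t]) hb
      ⟨ht.1, le_min (by linarith [le_max_right a t]) ht.2⟩
  refine ⟨γ, (hγ a le_rfl ⟨le_rfl, le_rfl⟩).trans (hsol₀ a le_rfl), fun t ht ↦ ?_⟩
  have hnhds : Iic (t + 1) ∈ 𝓝 t := Iic_mem_nhds (lt_add_one t)
  have hsolt := hsol (t + 1) (by linarith [mem_Ici.1 ht])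
  rw [← hasDerivWithinAt_inter hnhds, Ici_inter_Iic,
    hγ (t + 1) (by linarith [mem_Ici.1 ht]) ⟨ht, by linarith⟩]
  exact (hsolt t ⟨ht, by linarith⟩).congr (hγ _ (by linarith [mem_Ici.1 ht]))
    (hγ _ (by linarith [mem_Ici.1 ht]) ⟨ht, by linarith⟩)

end IntegralCurves

section Kirchhoff

variable {V : Type*} [NormedAddCommGroup V] [InnerProductSpace ℝ V]

local notation "⟪" x ", " y "⟫" => @inner ℝ _ _ x y

theorem norm_le_mul_exp_of_inner_le_mul_norm {γ g : ℝ → V} {a b C : ℝ} (hC : 0 ≤ C)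
    (hγ : ContinuousOn γ (Icc a b)) (hγ' : ∀ t ∈ Ico a b, HasDerivWithinAt γ (g t) (Ici t) t)
    (hg : ∀ t ∈ Ico a b, ⟪g t, γ t⟫ ≤ C * ‖γ t‖) :
    ∀ t ∈ Icc a b, ‖γ t‖ ≤ (‖γ a‖ + C) * exp (t - a) := by
  have hsq := le_gronwallBound_of_liminf_deriv_right_le (f := fun t ↦ ‖γ t‖ ^ 2)
    (f' := fun t ↦ 2 * ⟪g t, γ t⟫) (δ := ‖γ a‖ ^ 2) (K := 1) (ε := C ^ 2)
    (by simpa only [← real_inner_self_eq_norm_sq] using hγ.inner hγ)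
    (fun t ht r hr ↦ by
      have hderiv := (hγ' t ht).inner ℝ (hγ' t ht)
      rw [real_inner_comm (g t) (γ t), ← two_mul] at hderiv
      simpa only [slope_def_module, smul_eq_mul, real_inner_self_eq_norm_sq]
        using hderiv.liminf_right_slope_le hr)
    le_rfl
    (fun t ht ↦ by nlinarith [hg t ht, sq_nonneg (‖γ t‖ - C)]) -- `2C‖γ‖ ≤ ‖γ‖² + C²`
  intro t ht
  have hs : 0 ≤ t - a := sub_nonneg.2 ht.1
  have hexp : exp (t - a) ≤ exp (t - a) ^ 2 := by
    nlinarith [one_le_exp hs]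
  rw [← sq_le_sq₀ (norm_nonneg _) (by positivity)]
  calc ‖γ t‖ ^ 2 ≤ gronwallBound (‖γ a‖ ^ 2) 1 (C ^ 2) (t - a) := hsq t ht
    _ = ‖γ a‖ ^ 2 * exp (t - a) + C ^ 2 * (exp (t - a) - 1) := by
      simp [gronwallBound_of_K_ne_0 one_ne_zero]
    _ ≤ (‖γ a‖ + C) ^ 2 * exp (t - a) ^ 2 := by
      nlinarith [mul_nonneg (norm_nonneg (γ a)) hC, one_le_exp hs, exp_pos (t - a), hexp]
    _ = ((‖γ a‖ + C) * exp (t - a)) ^ 2 := by ring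

def kirchhoffField (B : V →L[ℝ] V) (x : V) : V := (1 + ⟪B x, x⟫) • B x

variable (B : V →L[ℝ] V)

theorem contDiff_kirchhoffField : ContDiff ℝ 1 (kirchhoffField B) :=
  (contDiff_const.add (B.contDiff.inner ℝ contDiff_id)).smul B.contDiff

variable {B}

theorem inner_kirchhoffField_self_nonneg (hB : ∀ x, 0 ≤ ⟪B x, x⟫) (x : V) :
    0 ≤ ⟪kirchhoffField B x, x⟫ := by
  rw [kirchhoffField, real_inner_smul_left]
  exact mul_nonneg (by linarith [hB x]) (hB x)

theorem exists_lipschitzOnWith_sub_kirchhoffField (f : ℝ → V) {s : Set V} (hs : IsCompact s) :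
    ∃ K, ∀ t, LipschitzOnWith K (fun x ↦ f t - kirchhoffField B x) s := by
  obtain ⟨K, hK⟩ := (contDiff_kirchhoffField B).locallyLipschitz.locallyLipschitzOn
    |>.exists_lipschitzOnWith_of_compact hs
  exact ⟨K, fun t ↦ by simpa using (LipschitzWith.const (f t)).lipschitzOnWith.sub hK⟩

theorem exists_isIntegralCurveOn_Icc_kirchhoff [FiniteDimensional ℝ V] (hB : ∀ x, 0 ≤ ⟪B x, x⟫)
    {f : ℝ → V} {a b : ℝ} (hab : a ≤ b) (hf : ContinuousOn f (Icc a b)) (x₀ : V) :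
    ∃ γ : ℝ → V, γ a = x₀ ∧
      IsIntegralCurveOn γ (fun t x ↦ f t - kirchhoffField B x) (Icc a b) := by
  obtain ⟨C, hC⟩ := isCompact_Icc.exists_bound_of_continuousOn hf
  have hC₀ : 0 ≤ C := (norm_nonneg _).trans (hC a (left_mem_Icc.2 hab))
  set R := (‖x₀‖ + C) * exp (b - a)
  let χ : ContDiffBump (0 : V) := ⟨R + 1, R + 2, by positivity, by linarith⟩
  set G : V → V := fun x ↦ χ x • kirchhoffField B x
  have hG : ∀ x, ‖x‖ ≤ R → G x = kirchhoffField B x := fun x hx ↦ by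
    have hχ : χ x = 1 := χ.one_of_mem_closedBall (mem_closedBall_zero_iff.2 (by
      change ‖x‖ ≤ R + 1
      linarith))
    simp only [G, hχ, one_smul]
  have hG_smooth : ContDiff ℝ 1 G := χ.contDiff.smul (contDiff_kirchhoffField B)
  have hG_supp : HasCompactSupport G := χ.hasCompactSupport.smul_right
  obtain ⟨K, hK⟩ := ContDiff.lipschitzWith_of_hasCompactSupport hG_supp hG_smooth one_ne_zero
  obtain ⟨L, hL⟩ := hG_smooth.continuous.bounded_above_of_compact_support hG_supp
  obtain ⟨γ, hγ₀, hγ⟩ := exists_isIntegralCurveOn_Icc_of_lipschitzWith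
    (v := fun t x ↦ f t - G x) hab (K := K) (L := C + L)
    (fun t _ ↦ by simpa using (LipschitzWith.const (f t)).sub hK)
    (fun _ ↦ hf.sub continuousOn_const)
    (fun t ht x ↦ (norm_sub_le _ _).trans (add_le_add (hC t ht) (hL x))) x₀
  have hinner : ∀ t ∈ Ico a b, ⟪f t - G (γ t), γ t⟫ ≤ C * ‖γ t‖ := fun t ht ↦ by
    rw [inner_sub_left, real_inner_smul_left]
    nlinarith [real_inner_le_norm (f t) (γ t), hC t (Ico_subset_Icc_self ht),
      mul_nonneg (χ.nonneg' (γ t)) (inner_kirchhoffField_self_nonneg hB (γ t)), norm_nonneg (γ t)]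
  have hbound : ∀ t ∈ Icc a b, ‖γ t‖ ≤ R := fun t ht ↦ by
    refine (norm_le_mul_exp_of_inner_le_mul_norm hC₀ hγ.continuousOn
      (fun t ht ↦ hγ.hasDerivWithinAt_Ici ht) hinner t ht).trans ?_
    rw [hγ₀]
    exact mul_le_mul_of_nonneg_left (exp_le_exp.2 (by linarith [ht.2])) (by positivity)
  refine ⟨γ, hγ₀, fun t ht ↦ ?_⟩
  simpa only [hG _ (hbound t ht)] using hγ t ht

end Kirchhoff

theorem semidiscrete_global_existence_uniqueness_general
    {V : Type*} [NormedAddCommGroup V] [InnerProductSpace ℝ V] [FiniteDimensional ℝ V]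
    (A : V →ₗ[ℝ] V)
    (hpos : ∀ v : V, (0 : ℝ) ≤ inner ℝ (A v) v)
    (f : ℝ → V) (hf_cont : ContinuousOn f (Ici 0))
    (u₀ : V) :
    ∃ u u' : ℝ → V,
      u 0 = u₀ ∧
      ContinuousOn u' (Ici 0) ∧
      (∀ t ∈ Ici (0 : ℝ), HasDerivWithinAt u (u' t) (Ici 0) t) ∧
      (∀ t ∈ Ici (0 : ℝ), u' t + (1 + (inner ℝ (A (u t)) (u t) : ℝ)) • A (u t) = f t) ∧
      (∀ v v' : ℝ → V,
        v 0 = u₀ →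
        ContinuousOn v' (Ici 0) →
        (∀ t ∈ Ici (0 : ℝ), HasDerivWithinAt v (v' t) (Ici 0) t) →
        (∀ t ∈ Ici (0 : ℝ), v' t + (1 + (inner ℝ (A (v t)) (v t) : ℝ)) • A (v t) = f t) →
        ∀ t ∈ Ici (0 : ℝ), v t = u t) := by
  set B := LinearMap.toContinuousLinearMap A
  set w : ℝ → V → V := fun t x ↦ f t - kirchhoffField B x
  have huniq : ∀ b γ γ', IsIntegralCurveOn γ w (Icc 0 b) → IsIntegralCurveOn γ' w (Icc 0 b) →
      γ 0 = γ' 0 → EqOn γ γ' (Icc 0 b) := fun b γ γ' ↦ IsIntegralCurveOn.eqOn_Icc fun s hs ↦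
    (exists_lipschitzOnWith_sub_kirchhoffField f hs).imp fun _ hK t _ ↦ hK t
  obtain ⟨u, hu₀, hu⟩ := exists_isIntegralCurveOn_Ici_of_forall_Icc (fun b hb ↦
    exists_isIntegralCurveOn_Icc_kirchhoff hpos hb (hf_cont.mono Icc_subset_Ici_self) u₀) huniq
  refine ⟨u, fun t ↦ w t (u t), hu₀,
    hf_cont.sub ((contDiff_kirchhoffField B).continuous.comp_continuousOn hu.continuousOn), hu,
    fun t _ ↦ sub_add_cancel _ _, fun v v' hv₀ _ hv hv_eq t ht ↦ ?_⟩
  have hv_curve : IsIntegralCurveOn v w (Ici 0) := fun s hs ↦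
    (hv s hs).congr_deriv (eq_sub_of_add_eq (hv_eq s hs))
  exact huniq t v u (hv_curve.mono Icc_subset_Ici_self) (hu.mono Icc_subset_Ici_self)
    (hv₀.trans hu₀.symm) ⟨ht, le_rfl⟩

/-- Existence and uniqueness of a continuously differentiable global solution to the
semidiscrete Kirchhoff equation `u' + (1 + ⟪Au, u⟫) Au = f` on `[0, ∞)`. -/
theorem semidiscrete_global_existence_uniqueness
    {V : Type*} [NormedAddCommGroup V] [InnerProductSpace ℝ V] [FiniteDimensional ℝ V]
    (A : V →ₗ[ℝ] V)
    (hsymm : ∀ v w : V, (inner ℝ (A v) w : ℝ) = inner ℝ v (A w))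
    (hpos : ∀ v : V, (0 : ℝ) ≤ inner ℝ (A v) v)
    (f : ℝ → V) (hf_cont : ContinuousOn f (Ici 0))
    (hf_bdd : ∃ C : ℝ, ∀ t ∈ Ici (0 : ℝ), ‖f t‖ ≤ C)
    (u₀ : V) :
    ∃ u u' : ℝ → V,
      u 0 = u₀ ∧
      ContinuousOn u' (Ici 0) ∧
      (∀ t ∈ Ici (0 : ℝ), HasDerivWithinAt u (u' t) (Ici 0) t) ∧
      (∀ t ∈ Ici (0 : ℝ), u' t + (1 + (inner ℝ (A (u t)) (u t) : ℝ)) • A (u t) = f t) ∧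
      (∀ v v' : ℝ → V,
        v 0 = u₀ →
        ContinuousOn v' (Ici 0) →
        (∀ t ∈ Ici (0 : ℝ), HasDerivWithinAt v (v' t) (Ici 0) t) →
        (∀ t ∈ Ici (0 : ℝ), v' t + (1 + (inner ℝ (A (v t)) (v t) : ℝ)) • A (v t) = f t) →
        ∀ t ∈ Ici (0 : ℝ), v t = u t) :=
  semidiscrete_global_existence_uniqueness_general A hpos f hf_cont u₀
end

section
/- Let V be a real inner product space, A : V → V a symmetric linear map with ⟪A v, v⟫ ≥ λ₁‖v‖² for all v ∈ V for some λ₁ > 0, f : [0,∞) → V continuous with ‖f(t)‖ ≤ F for all t ≥ 0, and let u : [0,∞) → V be continuously differentiable with u'(t) + (1 + ⟪A u(t), u(t)⟫) · A u(t) = f(t) for all t ≥ 0. Then for every α with 0 < α < λ₁/2, setting β = 1 − 2α/λ₁, for all t ≥ 0: ‖u(t)‖² + min(β, 2) · e^{−2αt} ∫₀ᵗ e^{2αs} (⟪A u(s), u(s)⟫ + ⟪A u(s), u(s)⟫²) ds ≤ e^{−2αt}‖u(0)‖² + (F²/(2αλ₁))(1 − e^{−2αt}). -/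
/-!
The Lyapunov function `φ(s) = e^{2αs} (‖u s‖² - F²/(2αλ₁))` satisfies
`φ' + β e^{2αs} (a + a²) ≤ 0` with `a = ⟪A u, u⟫`: testing the equation with `u` gives
`½ d/ds ‖u‖² + a + a² = ⟪f, u⟫`, Young's inequality absorbs `⟪f, u⟫` into `λ₁‖u‖² ≤ a`, and the
coercivity bound pays for the weight `e^{2αs}`. Integrating this differential inequality over
`[0, t]` and multiplying by `e^{-2αt}` is the estimate.
-/

open Set Real MeasureTheory

/-- No integrability of `g` is needed: an undefined integral is `0`, and the claim then reduces to
`φ` being antitone. -/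
theorem add_intervalIntegral_le_of_hasDerivWithinAt {φ φ' g : ℝ → ℝ} {a b : ℝ} (hab : a ≤ b)
    (hcont : ContinuousOn φ (Icc a b))
    (hderiv : ∀ x ∈ Ioo a b, HasDerivWithinAt φ (φ' x) (Ioi x) x)
    (hg : ∀ x ∈ Ioo a b, 0 ≤ g x) (hφg : ∀ x ∈ Ioo a b, φ' x + g x ≤ 0) :
    φ b + ∫ x in a..b, g x ≤ φ a := by
  have hneg : ContinuousOn (fun x => -φ x) (Icc a b) := hcont.neg
  have hderiv_neg : ∀ x ∈ Ioo a b, HasDerivWithinAt (fun x => -φ x) (-φ' x) (Ioi x) x :=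
    fun x hx => (hderiv x hx).neg
  by_cases hint : IntegrableOn g (Icc a b)
  · have := intervalIntegral.integral_le_sub_of_hasDeriv_right_of_le hab hneg hderiv_neg hint
      fun x hx => by linarith [hφg x hx]
    linarith
  · have hanti := intervalIntegral.integral_le_sub_of_hasDeriv_right_of_le hab hneg hderiv_neg
      (integrableOn_zero (ε' := ℝ)) fun x hx => by linarith [hφg x hx, hg x hx]
    rw [intervalIntegral.integral_undef
      (mt (intervalIntegrable_iff_integrableOn_Icc_of_le hab).mp hint)]
    simp only [intervalIntegral.integral_zero] at hanti
    linarith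

theorem hasDerivWithinAt_exp_mul_norm_sq_sub {E : Type*} [NormedAddCommGroup E]
    [InnerProductSpace ℝ E] {u : ℝ → E} {u' : E} {s : Set ℝ} {x : ℝ} (k c : ℝ)
    (hu : HasDerivWithinAt u u' s x) :
    HasDerivWithinAt (fun y => exp (k * y) * (‖u y‖ ^ 2 - c))
      (exp (k * x) * (k * (‖u x‖ ^ 2 - c) + 2 * inner ℝ (u x) u')) s x := by
  have hexp : HasDerivAt (fun y => exp (k * y)) (exp (k * x) * k) x := by
    simpa using ((hasDerivAt_id x).const_mul k).exp
  exact (hexp.hasDerivWithinAt.fun_mul (hu.norm_sq.sub_const c)).congr_deriv (by ring)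

/-- The pointwise dissipation inequality, with `x = ‖u‖`, `p = ⟪f, u⟫` and `a = ⟪A u, u⟫`. -/
theorem kirchhoff_dissipation_le {lam α F x p a : ℝ} (hlam : 0 < lam) (hα : 0 ≤ α)
    (hp : p ≤ F * x) (ha : lam * x ^ 2 ≤ a) :
    2 * α * x ^ 2 + 2 * (p - (1 + a) * a) + (1 - 2 * α / lam) * (a + a ^ 2) ≤ F ^ 2 / lam := by
  have hweight : 2 * α * x ^ 2 ≤ 2 * α / lam * a := by
    rw [div_mul_eq_mul_div, le_div_iff₀ hlam]
    nlinarith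
  have hyoung : 2 * F * x ≤ lam * x ^ 2 + F ^ 2 / lam := by
    rw [← sub_nonneg]
    have : lam * x ^ 2 + F ^ 2 / lam - 2 * F * x = (lam * x - F) ^ 2 / lam := by
      field_simp; ring
    rw [this]; positivity
  have hsq : 0 ≤ 2 * α / lam * a ^ 2 := by positivity
  linarith [hp, hyoung, sq_nonneg a]

theorem semidiscrete_apriori_L2_general
    {V : Type*} [NormedAddCommGroup V] [InnerProductSpace ℝ V]
    (A : V →ₗ[ℝ] V)
    (lambda1 : ℝ) (hlambda1 : 0 < lambda1)
    (hcoercive : ∀ v : V, (inner ℝ (A v) v : ℝ) ≥ lambda1 * ‖v‖ ^ 2)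
    (f : ℝ → V)
    (F : ℝ) (hF : ∀ t ∈ Ici (0 : ℝ), ‖f t‖ ≤ F)
    (u u' : ℝ → V)
    (hu_deriv : ∀ t ∈ Ici (0 : ℝ), HasDerivWithinAt u (u' t) (Ici 0) t)
    (heq : ∀ t ∈ Ici (0 : ℝ), u' t + (1 + (inner ℝ (A (u t)) (u t) : ℝ)) • A (u t) = f t)
    (α : ℝ) (hα : 0 < α) (halam : α < lambda1 / 2) (β : ℝ) (hβ : β = 1 - 2 * α / lambda1) :
    ∀ t ∈ Ici (0 : ℝ),
      ‖u t‖ ^ 2 + min β 2 * exp (-2 * α * t) *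
          (∫ s in (0 : ℝ)..t,
            exp (2 * α * s) * ((inner ℝ (A (u s)) (u s) : ℝ) + (inner ℝ (A (u s)) (u s) : ℝ) ^ 2))
        ≤ exp (-2 * α * t) * ‖u 0‖ ^ 2 + F ^ 2 / (2 * α * lambda1) * (1 - exp (-2 * α * t)) := by
  intro t ht
  set a : ℝ → ℝ := fun s => inner ℝ (A (u s)) (u s)
  set c := F ^ 2 / (2 * α * lambda1)
  have ha_nonneg : ∀ s, 0 ≤ a s := fun s =>
    (by positivity : 0 ≤ lambda1 * ‖u s‖ ^ 2).trans (hcoercive (u s))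
  have hβ_nonneg : 0 ≤ β := by
    rw [hβ, sub_nonneg, div_le_one hlambda1]; linarith
  have hβ_min : min β 2 = β :=
    min_eq_left (by rw [hβ]; linarith [(by positivity : 0 ≤ 2 * α / lambda1)])
  have hderiv : ∀ s ∈ Ici (0 : ℝ), HasDerivWithinAt (fun s => exp (2 * α * s) * (‖u s‖ ^ 2 - c))
      (exp (2 * α * s) * (2 * α * (‖u s‖ ^ 2 - c) + 2 * inner ℝ (u s) (u' s))) (Ici 0) s :=
    fun s hs => hasDerivWithinAt_exp_mul_norm_sq_sub (2 * α) c (hu_deriv s hs)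
  have hdiss : ∀ s ∈ Ici (0 : ℝ),
      exp (2 * α * s) * (2 * α * (‖u s‖ ^ 2 - c) + 2 * inner ℝ (u s) (u' s))
        + β * (exp (2 * α * s) * (a s + a s ^ 2)) ≤ 0 := by
    intro s hs
    have hu' : inner ℝ (u s) (u' s) = inner ℝ (f s) (u s) - (1 + a s) * a s := by
      rw [real_inner_comm, eq_sub_of_add_eq (heq s hs), inner_sub_left, real_inner_smul_left]
    have hp : inner ℝ (f s) (u s) ≤ F * ‖u s‖ :=
      (real_inner_le_norm _ _).trans (mul_le_mul_of_nonneg_right (hF s hs) (norm_nonneg _))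
    have hc : 2 * α * c = F ^ 2 / lambda1 := by simp only [c]; field_simp
    have hbound := kirchhoff_dissipation_le hlambda1 hα.le hp (hcoercive (u s))
    calc _ = exp (2 * α * s) * (2 * α * ‖u s‖ ^ 2 + 2 * (inner ℝ (f s) (u s) - (1 + a s) * a s)
            + (1 - 2 * α / lambda1) * (a s + a s ^ 2) - F ^ 2 / lambda1) := by
          rw [hu', ← hc, hβ]; ring
      _ ≤ 0 := mul_nonpos_of_nonneg_of_nonpos (exp_pos _).le (by linarith)
  have hψ := add_intervalIntegral_le_of_hasDerivWithinAt
    (g := fun s => β * (exp (2 * α * s) * (a s + a s ^ 2))) ht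
    (fun s hs => (hderiv s hs.1).continuousWithinAt.mono Icc_subset_Ici_self)
    (fun s hs => (hderiv s hs.1.le).mono fun y hy => (hs.1.trans hy).le)
    (fun s _ => mul_nonneg hβ_nonneg (by have := ha_nonneg s; positivity))
    (fun s hs => hdiss s hs.1.le)
  rw [intervalIntegral.integral_const_mul, mul_zero, exp_zero, one_mul] at hψ
  have hexp_inv : exp (-2 * α * t) * exp (2 * α * t) = 1 := by
    rw [← exp_add]; ring_nf; exact exp_zero
  rw [hβ_min]
  linear_combination exp (-2 * α * t) * hψ - (‖u t‖ ^ 2 - c) * hexp_inv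

/-- Exponentially weighted a priori bound (3.2) for the semidiscrete Kirchhoff equation. -/
theorem semidiscrete_apriori_L2
    {V : Type*} [NormedAddCommGroup V] [InnerProductSpace ℝ V]
    (A : V →ₗ[ℝ] V)
    (hsymm : ∀ v w : V, (inner ℝ (A v) w : ℝ) = inner ℝ v (A w))
    (lambda1 : ℝ) (hlambda1 : 0 < lambda1)
    (hcoercive : ∀ v : V, (inner ℝ (A v) v : ℝ) ≥ lambda1 * ‖v‖ ^ 2)
    (f : ℝ → V) (hf_cont : ContinuousOn f (Ici 0))
    (F : ℝ) (hF : ∀ t ∈ Ici (0 : ℝ), ‖f t‖ ≤ F)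
    (u u' : ℝ → V)
    (hu'_cont : ContinuousOn u' (Ici 0))
    (hu_deriv : ∀ t ∈ Ici (0 : ℝ), HasDerivWithinAt u (u' t) (Ici 0) t)
    (heq : ∀ t ∈ Ici (0 : ℝ), u' t + (1 + (inner ℝ (A (u t)) (u t) : ℝ)) • A (u t) = f t)
    (α : ℝ) (hα : 0 < α) (halam : α < lambda1 / 2) (β : ℝ) (hβ : β = 1 - 2 * α / lambda1) :
    ∀ t ∈ Ici (0 : ℝ),
      ‖u t‖ ^ 2 + min β 2 * exp (-2 * α * t) *
          (∫ s in (0 : ℝ)..t,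
            exp (2 * α * s) * ((inner ℝ (A (u s)) (u s) : ℝ) + (inner ℝ (A (u s)) (u s) : ℝ) ^ 2))
        ≤ exp (-2 * α * t) * ‖u 0‖ ^ 2 + F ^ 2 / (2 * α * lambda1) * (1 - exp (-2 * α * t)) :=
  semidiscrete_apriori_L2_general A lambda1 hlambda1 hcoercive f F hF u u' hu_deriv heq α hα halam β
    hβ
end

section
/- Let V be a real inner product space, A : V → V a symmetric linear map with ⟪A v, v⟫ ≥ λ₁‖v‖² for all v ∈ V for some λ₁ > 0, f : [0,∞) → V continuous with ‖f(t)‖ ≤ F for all t ≥ 0, and let u : [0,∞) → V be continuously differentiable with u'(t) + (1 + ⟪A u(t), u(t)⟫) · A u(t) = f(t) for all t ≥ 0. Then for every α with 0 < α < λ₁/2, setting β = 1 − 2α/λ₁, for all t ≥ 0: ⟪A u(t), u(t)⟫ + β e^{−2αt} ∫₀ᵗ e^{2αs} ‖A u(s)‖² ds + 2 e^{−2αt} ∫₀ᵗ e^{2αs} ⟪A u(s), u(s)⟫ ‖A u(s)‖² ds ≤ e^{−2αt} ⟪A u(0), u(0)⟫ + (F²/(2α))(1 − e^{−2αt}). 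-/
/-!
For the energy `E = ⟪A u, u⟫` symmetry of `A` gives `E' = 2⟪A u, u'⟫`, and testing the equation
against `A u` yields `2αE + E' + (β + 2E)‖A u‖² ≤ F²` pointwise: the nonlinear term contributes
`-2(1 + E)‖A u‖²`, Young's inequality absorbs `2⟪A u, f⟫` into `‖A u‖² + F²`, and coercivity
gives `λ₁ E ≤ ‖A u‖²`, which pays for `2αE`. Multiplying by the integrating factor `e^{2αt}` and
integrating gives the bound.

The operator `A` need not be continuous, so the continuity of `t ↦ A u(t)` has to be read off
the equation: `E (1 + E) = ⟪f - u', u⟫` is continuous, hence so is `E ≥ 0`, and then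
`A u = (1 + E)⁻¹ • (f - u')`.
-/

open Set Real
open scoped RealInnerProductSpace

section SymmetricMap

variable {V : Type*} [NormedAddCommGroup V] [InnerProductSpace ℝ V] {A : V →ₗ[ℝ] V}

theorem LinearMap.IsSymmetric.inner_map_self_sub_inner_map_self (hA : A.IsSymmetric) (a b : V) :
    ⟪A a, a⟫ - ⟪A b, b⟫ = ⟪A a + A b, a - b⟫ := by
  rw [inner_add_left, inner_sub_right, inner_sub_right, hA b a, real_inner_comm (A a) b]
  ring

theorem mul_inner_map_self_le_norm_sq {c : ℝ} (hc : 0 ≤ c)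
    (hcoercive : ∀ v : V, c * ‖v‖ ^ 2 ≤ ⟪A v, v⟫) (v : V) : c * ⟪A v, v⟫ ≤ ‖A v‖ ^ 2 := by
  have hlower := hcoercive v
  have hupper : ⟪A v, v⟫ ≤ ‖A v‖ * ‖v‖ := real_inner_le_norm (A v) v
  nlinarith [norm_nonneg v, norm_nonneg (A v), sq_nonneg (‖A v‖ - c * ‖v‖)]

theorem HasDerivWithinAt.inner_map_self (hA : A.IsSymmetric) {u : ℝ → V} {u' : V} {s : Set ℝ}
    {t : ℝ} (hu : HasDerivWithinAt u u' s t) (hAu : ContinuousWithinAt (fun x => A (u x)) s t) :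
    HasDerivWithinAt (fun x => ⟪A (u x), u x⟫) (2 * ⟪A (u t), u'⟫) s t := by
  rw [hasDerivWithinAt_iff_tendsto_slope] at hu ⊢
  have hslope : slope (fun x => ⟪A (u x), u x⟫) t = fun x => ⟪A (u x) + A (u t), slope u t x⟫ := by
    ext x
    simp only [slope_def_module, real_inner_smul_right,
      hA.inner_map_self_sub_inner_map_self, smul_eq_mul]
  rw [hslope, two_mul, ← inner_add_left]
  exact ((hAu.tendsto.mono_left (nhdsWithin_mono _ sdiff_subset)).add tendsto_const_nhds).inner hu

end SymmetricMap

theorem ContinuousOn.of_mul_one_add_self {X : Type*} [TopologicalSpace X] {g : X → ℝ}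
    {s : Set X} (hg0 : ∀ x ∈ s, 0 ≤ g x) (hg : ContinuousOn (fun x => g x * (1 + g x)) s) :
    ContinuousOn g s := by
  have hroot : ContinuousOn (fun x => (√(1 + 4 * (g x * (1 + g x))) - 1) / 2) s :=
    ((continuousOn_const.add (continuousOn_const.mul hg)).sqrt.sub continuousOn_const).div_const 2
  refine hroot.congr fun x hx => ?_
  have hsq : 1 + 4 * (g x * (1 + g x)) = (1 + 2 * g x) ^ 2 := by ring
  simp only [hsq, sqrt_sq (by linarith [hg0 x hx] : 0 ≤ 1 + 2 * g x)]
  ring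

section Kirchhoff

variable {V : Type*} [NormedAddCommGroup V] [InnerProductSpace ℝ V] {A : V →ₗ[ℝ] V}
  {X : Type*} [TopologicalSpace X] {s : Set X} {f u u' : X → V}

theorem continuousOn_inner_map_self_of_kirchhoff (hpos : ∀ v, 0 ≤ ⟪A v, v⟫)
    (hf : ContinuousOn f s) (hu : ContinuousOn u s) (hu' : ContinuousOn u' s)
    (heq : ∀ t ∈ s, u' t + (1 + ⟪A (u t), u t⟫) • A (u t) = f t) :
    ContinuousOn (fun t => ⟪A (u t), u t⟫) s := by
  refine ContinuousOn.of_mul_one_add_self (fun t _ => hpos (u t)) ?_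
  have hprod : ContinuousOn (fun t => ⟪f t - u' t, u t⟫) s := (hf.sub hu').inner hu
  refine hprod.congr fun t ht => ?_
  dsimp only
  rw [← eq_sub_of_add_eq' (heq t ht), real_inner_smul_left]
  ring

theorem continuousOn_map_of_kirchhoff (hpos : ∀ v, 0 ≤ ⟪A v, v⟫)
    (hf : ContinuousOn f s) (hu : ContinuousOn u s) (hu' : ContinuousOn u' s)
    (heq : ∀ t ∈ s, u' t + (1 + ⟪A (u t), u t⟫) • A (u t) = f t) :
    ContinuousOn (fun t => A (u t)) s := by
  have hE := continuousOn_inner_map_self_of_kirchhoff hpos hf hu hu' heq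
  have hE1 : ∀ t, 1 + ⟪A (u t), u t⟫ ≠ 0 := fun t => by linarith [hpos (u t)]
  have hquot : ContinuousOn (fun t => (1 + ⟪A (u t), u t⟫)⁻¹ • (f t - u' t)) s :=
    ((continuousOn_const.add hE).inv₀ fun t _ => hE1 t).smul (hf.sub hu')
  refine hquot.congr fun t ht => ?_
  dsimp only
  rw [← eq_sub_of_add_eq' (heq t ht), inv_smul_smul₀ (hE1 t)]

theorem kirchhoff_energy_rate_le (w f : V) {E F α lambda1 : ℝ} (hlambda1 : 0 < lambda1)
    (hα : 0 ≤ α) (hcoercive : lambda1 * E ≤ ‖w‖ ^ 2) (hf : ‖f‖ ≤ F) :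
    2 * α * E + 2 * ⟪w, f - (1 + E) • w⟫ + (1 - 2 * α / lambda1 + 2 * E) * ‖w‖ ^ 2 ≤ F ^ 2 := by
  have hinner : ⟪w, f - (1 + E) • w⟫ = ⟪w, f⟫ - (1 + E) * ‖w‖ ^ 2 := by
    rw [inner_sub_right, real_inner_smul_right, real_inner_self_eq_norm_sq]
  have hyoung : 2 * ⟪w, f⟫ ≤ ‖w‖ ^ 2 + F ^ 2 := by
    have hcs := (real_inner_le_norm w f).trans (mul_le_mul_of_nonneg_left hf (norm_nonneg w))
    nlinarith [sq_nonneg (‖w‖ - F)]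
  have hcoercive' : 2 * α * E ≤ 2 * α / lambda1 * ‖w‖ ^ 2 := by
    rw [div_mul_eq_mul_div, le_div_iff₀ hlambda1]
    nlinarith
  rw [hinner]
  nlinarith

end Kirchhoff

theorem add_exp_mul_integral_le_of_hasDerivWithinAt {E E' ψ : ℝ → ℝ} {α F t : ℝ} (hα : α ≠ 0)
    (ht : 0 ≤ t) (hE : ContinuousOn E (Icc 0 t))
    (hE' : ∀ s ∈ Ioo 0 t, HasDerivWithinAt E (E' s) (Ioi s) s) (hψ : ContinuousOn ψ (Icc 0 t))
    (hle : ∀ s ∈ Ioo 0 t, 2 * α * E s + E' s + ψ s ≤ F ^ 2) :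
    E t + exp (-2 * α * t) * ∫ s in (0 : ℝ)..t, exp (2 * α * s) * ψ s
      ≤ exp (-2 * α * t) * E 0 + F ^ 2 / (2 * α) * (1 - exp (-2 * α * t)) := by
  have hexp : ∀ s, HasDerivAt (fun x => exp (2 * α * x)) (exp (2 * α * s) * (2 * α)) s :=
    fun s => by simpa using ((hasDerivAt_id s).const_mul (2 * α)).exp
  -- `g' = e^{2αs} (F² - 2αE - E') ≥ e^{2αs} ψ`
  have hint := intervalIntegral.integral_le_sub_of_hasDeriv_right_of_le ht
    (g := fun s => exp (2 * α * s) * (F ^ 2 / (2 * α) - E s))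
    (g' := fun s => exp (2 * α * s) * (2 * α) * (F ^ 2 / (2 * α) - E s) - exp (2 * α * s) * E' s)
    (by fun_prop)
    (fun s hs =>
      ((hexp s).hasDerivWithinAt.fun_mul ((hE' s hs).const_sub _)).congr_deriv (by ring))
    ((by fun_prop : ContinuousOn (fun s => exp (2 * α * s) * ψ s) (Icc 0 t)).integrableOn_Icc)
    (fun s hs => by
      have hpos := exp_pos (2 * α * s)
      have hcancel : F ^ 2 / (2 * α) * (2 * α) = F ^ 2 := div_mul_cancel₀ _ (by positivity)
      nlinarith [hle s hs])
  have hinv : exp (-2 * α * t) * exp (2 * α * t) = 1 := by rw [← exp_add]; simp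
  have hscaled := mul_le_mul_of_nonneg_left hint (exp_pos (-2 * α * t)).le
  simp only [mul_zero, exp_zero] at hscaled
  linear_combination hscaled + (F ^ 2 / (2 * α) - E t) * hinv

theorem semidiscrete_apriori_H1_general
    {V : Type*} [NormedAddCommGroup V] [InnerProductSpace ℝ V]
    (A : V →ₗ[ℝ] V)
    (hsymm : ∀ v w : V, (inner ℝ (A v) w : ℝ) = inner ℝ v (A w))
    (lambda1 : ℝ) (hlambda1 : 0 < lambda1)
    (hcoercive : ∀ v : V, (inner ℝ (A v) v : ℝ) ≥ lambda1 * ‖v‖ ^ 2)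
    (f : ℝ → V) (hf_cont : ContinuousOn f (Ici 0))
    (F : ℝ) (hF : ∀ t ∈ Ici (0 : ℝ), ‖f t‖ ≤ F)
    (u u' : ℝ → V)
    (hu'_cont : ContinuousOn u' (Ici 0))
    (hu_deriv : ∀ t ∈ Ici (0 : ℝ), HasDerivWithinAt u (u' t) (Ici 0) t)
    (heq : ∀ t ∈ Ici (0 : ℝ), u' t + (1 + (inner ℝ (A (u t)) (u t) : ℝ)) • A (u t) = f t)
    (α : ℝ) (hα : 0 < α) (β : ℝ) (hβ : β = 1 - 2 * α / lambda1) :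
    ∀ t ∈ Ici (0 : ℝ),
      (inner ℝ (A (u t)) (u t) : ℝ)
          + β * exp (-2 * α * t) * (∫ s in (0 : ℝ)..t, exp (2 * α * s) * ‖A (u s)‖ ^ 2)
          + 2 * exp (-2 * α * t) *
              (∫ s in (0 : ℝ)..t,
                exp (2 * α * s) * (inner ℝ (A (u s)) (u s) : ℝ) * ‖A (u s)‖ ^ 2)
        ≤ exp (-2 * α * t) * (inner ℝ (A (u 0)) (u 0) : ℝ)
            + F ^ 2 / (2 * α) * (1 - exp (-2 * α * t)) := by
  intro t (ht : 0 ≤ t)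
  have hpos : ∀ v, 0 ≤ ⟪A v, v⟫ := fun v =>
    (by positivity : 0 ≤ lambda1 * ‖v‖ ^ 2).trans (hcoercive v)
  have hu : ContinuousOn u (Ici 0) := fun s hs => (hu_deriv s hs).continuousWithinAt
  have hE := continuousOn_inner_map_self_of_kirchhoff hpos hf_cont hu hu'_cont heq
  have hAu := continuousOn_map_of_kirchhoff hpos hf_cont hu hu'_cont heq
  have hEt : ContinuousOn (fun s => ⟪A (u s), u s⟫) (uIcc 0 t) :=
    hE.mono (uIcc_of_le ht ▸ Icc_subset_Ici_self)
  have hAut : ContinuousOn (fun s => ‖A (u s)‖ ^ 2) (uIcc 0 t) :=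
    (hAu.mono (uIcc_of_le ht ▸ Icc_subset_Ici_self)).norm.pow 2
  have hbound := add_exp_mul_integral_le_of_hasDerivWithinAt (E' := fun s => 2 * ⟪A (u s), u' s⟫)
    (ψ := fun s => (β + 2 * ⟪A (u s), u s⟫) * ‖A (u s)‖ ^ 2) (F := F) hα.ne' ht
    (uIcc_of_le ht ▸ hEt)
    (fun s hs => ((hu_deriv s hs.1.le).inner_map_self hsymm (hAu s hs.1.le)).mono
      (Ioi_subset_Ici hs.1.le))
    (uIcc_of_le ht ▸ by fun_prop)
    (fun s hs => by
      rw [hβ, eq_sub_of_add_eq (heq s hs.1.le)]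
      exact kirchhoff_energy_rate_le _ _ hlambda1 hα.le
        (mul_inner_map_self_le_norm_sq hlambda1.le (fun v => hcoercive v) (u s)) (hF s hs.1.le))
  have hsplit : ∫ s in (0 : ℝ)..t, exp (2 * α * s) * ((β + 2 * ⟪A (u s), u s⟫) * ‖A (u s)‖ ^ 2)
      = β * (∫ s in (0 : ℝ)..t, exp (2 * α * s) * ‖A (u s)‖ ^ 2)
        + 2 * ∫ s in (0 : ℝ)..t, exp (2 * α * s) * ⟪A (u s), u s⟫ * ‖A (u s)‖ ^ 2 := by
    rw [← intervalIntegral.integral_const_mul, ← intervalIntegral.integral_const_mul,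
      ← intervalIntegral.integral_add (ContinuousOn.intervalIntegrable (by fun_prop))
        (ContinuousOn.intervalIntegrable (by fun_prop))]
    congr 1 with s
    ring
  rw [hsplit] at hbound
  linarith

/-- Lemma 3.1: exponentially weighted `H¹`-type a priori bound for the semidiscrete
Kirchhoff equation. -/
theorem semidiscrete_apriori_H1
    {V : Type*} [NormedAddCommGroup V] [InnerProductSpace ℝ V]
    (A : V →ₗ[ℝ] V)
    (hsymm : ∀ v w : V, (inner ℝ (A v) w : ℝ) = inner ℝ v (A w))
    (lambda1 : ℝ) (hlambda1 : 0 < lambda1)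
    (hcoercive : ∀ v : V, (inner ℝ (A v) v : ℝ) ≥ lambda1 * ‖v‖ ^ 2)
    (f : ℝ → V) (hf_cont : ContinuousOn f (Ici 0))
    (F : ℝ) (hF : ∀ t ∈ Ici (0 : ℝ), ‖f t‖ ≤ F)
    (u u' : ℝ → V)
    (hu'_cont : ContinuousOn u' (Ici 0))
    (hu_deriv : ∀ t ∈ Ici (0 : ℝ), HasDerivWithinAt u (u' t) (Ici 0) t)
    (heq : ∀ t ∈ Ici (0 : ℝ), u' t + (1 + (inner ℝ (A (u t)) (u t) : ℝ)) • A (u t) = f t)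
    (α : ℝ) (hα : 0 < α) (halam : α < lambda1 / 2) (β : ℝ) (hβ : β = 1 - 2 * α / lambda1) :
    ∀ t ∈ Ici (0 : ℝ),
      (inner ℝ (A (u t)) (u t) : ℝ)
          + β * exp (-2 * α * t) * (∫ s in (0 : ℝ)..t, exp (2 * α * s) * ‖A (u s)‖ ^ 2)
          + 2 * exp (-2 * α * t) *
              (∫ s in (0 : ℝ)..t,
                exp (2 * α * s) * (inner ℝ (A (u s)) (u s) : ℝ) * ‖A (u s)‖ ^ 2)
        ≤ exp (-2 * α * t) * (inner ℝ (A (u 0)) (u 0) : ℝ)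
            + F ^ 2 / (2 * α) * (1 - exp (-2 * α * t)) :=
  semidiscrete_apriori_H1_general A hsymm lambda1 hlambda1 hcoercive f hf_cont F hF u u' hu'_cont
    hu_deriv heq α hα β hβ
end

section
/- Let V be a real inner product space, A : V → V a symmetric linear map with ⟪A v, v⟫ ≥ λ₁‖v‖² for all v ∈ V for some λ₁ > 0, f : [0,∞) → V continuous with ‖f(t)‖ ≤ F for all t ≥ 0, and let u : [0,∞) → V be continuously differentiable with u'(t) + (1 + ⟪A u(t), u(t)⟫) · A u(t) = f(t) for all t ≥ 0. Then for every α with 0 < α < λ₁/2, setting β = 1 − 2α/λ₁, for all t ≥ 0: 2 e^{−2αt} ∫₀ᵗ e^{2αs} ‖u'(s)‖² ds + (2 + ⟪A u(t), u(t)⟫)⟪A u(t), u(t)⟫ ≤ e^{−2αt}(2 + ⟪A u(0), u(0)⟫)⟪A u(0), u(0)⟫ + (F²/α)(1 − e^{−2αt}) + α(1 + 4/β)·(e^{−2αt}‖u(0)‖² + (F²/(2αλ₁))(1 − e^{−2αt})). -/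
open Set Real

open scoped RealInnerProductSpace

/-!
Write `a = ⟪A u, u⟫`; by symmetry of `A`, `a' = 2 ⟪A u, u'⟫`. Testing the equation against `u'`
gives `2 ‖u'‖² + ((2 + a) a)' ≤ 2 F²`, and testing it against `u` gives
`(‖u‖²)' + (2 + a) a ≤ 2 F ‖u‖`. With coercivity the latter first yields the decay
`‖u t‖² ≤ e^{-λ₁ t} ‖u 0‖² + F² / λ₁²`; combining both, the quantity
`(2 + a) a + 2α ‖u‖² + 2 e^{-2αt} ∫₀ᵗ e^{2αs} ‖u'‖² + K e^{-λ₁ t} ‖u 0‖²` satisfies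
`y' ≤ -2α y + c` for suitable constants `K`, `c`, and Grönwall's lemma bounds it.

The derivative of `a` needs `A ∘ u` continuous, which is not automatic for an unbounded `A`: it
follows from the equation, because `a` is recovered from `⟪f - u', u⟫ = (1 + a) a` by the
quadratic formula.
-/

theorem le_of_hasDerivWithinAt_le_neg_mul_add {y y' : ℝ → ℝ} {a k c t : ℝ} (hk : k ≠ 0)
    (hy : ∀ x ∈ Ici a, HasDerivWithinAt y (y' x) (Ici a) x)
    (hbound : ∀ x ∈ Ici a, y' x ≤ -k * y x + c) (ht : a ≤ t) :
    y t ≤ exp (-k * (t - a)) * y a + c / k * (1 - exp (-k * (t - a))) := by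
  have h := le_gronwallBound_of_liminf_deriv_right_le (f' := y') (K := -k) (ε := c) (b := t)
    (fun x hx => (hy x (Icc_subset_Ici_self hx)).continuousWithinAt.mono Icc_subset_Ici_self)
    (fun x hx _ hr =>
      ((hy x (Ico_subset_Ici_self hx)).mono (Ici_subset_Ici.2 hx.1)).liminf_right_slope_le hr)
    le_rfl (fun x hx => hbound x (Ico_subset_Ici_self hx)) t (right_mem_Icc.2 ht)
  rw [gronwallBound_of_K_ne_0 (neg_ne_zero.2 hk), div_neg] at h
  linarith

theorem hasDerivWithinAt_integral_of_continuousOn_Ici {E : Type*} [NormedAddCommGroup E]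
    [NormedSpace ℝ E] [CompleteSpace E] {g : ℝ → E} {a x : ℝ} (hg : ContinuousOn g (Ici a))
    (hx : x ∈ Ici a) : HasDerivWithinAt (fun t => ∫ s in a..t, g s) (g x) (Ici a) x := by
  set G := fun s => g (max a s)
  have hG : Continuous G :=
    hg.comp_continuous (continuous_const.max continuous_id) fun s => le_max_left a s
  have hGg : ∀ s ∈ Ici a, G s = g s := fun s hs => by simp only [G, max_eq_right (mem_Ici.1 hs)]
  have hderiv := (intervalIntegral.integral_hasDerivAt_right (hG.intervalIntegrable a x)
    (hG.stronglyMeasurableAtFilter _ _) hG.continuousAt).hasDerivWithinAt (s := Ici a)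
  rw [hGg x hx] at hderiv
  refine hderiv.congr_of_mem (fun t ht => intervalIntegral.integral_congr fun s hs => ?_) hx
  rw [uIcc_of_le ht] at hs
  exact (hGg s hs.1).symm

theorem hasDerivWithinAt_exp_mul_integral_exp_mul {g : ℝ → ℝ} {a k x : ℝ}
    (hg : ContinuousOn g (Ici a)) (hx : x ∈ Ici a) :
    HasDerivWithinAt (fun t => exp (-k * t) * ∫ s in a..t, exp (k * s) * g s)
      (g x - k * (exp (-k * x) * ∫ s in a..x, exp (k * s) * g s)) (Ici a) x := by
  have hw : ContinuousOn (fun s => exp (k * s) * g s) (Ici a) := by fun_prop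
  refine ((((hasDerivAt_id x).const_mul (-k)).exp.hasDerivWithinAt).mul
    (hasDerivWithinAt_integral_of_continuousOn_Ici hw hx)).congr_deriv ?_
  have hexp : exp (-k * x) * exp (k * x) = 1 := by rw [← exp_add]; ring_nf; exact exp_zero
  simp only [id]
  linear_combination g x * hexp

theorem two_mul_mul_le_div_add_mul_sq {μ : ℝ} (hμ : 0 < μ) (a b : ℝ) :
    2 * a * b ≤ a ^ 2 / μ + μ * b ^ 2 := by
  have : a ^ 2 / μ + μ * b ^ 2 - 2 * a * b = (a - μ * b) ^ 2 / μ := by field_simp; ring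
  rw [← sub_nonneg, this]
  positivity

section InnerProductSpace

variable {V : Type*} [NormedAddCommGroup V] [InnerProductSpace ℝ V]

theorem ContinuousOn.of_one_add_inner_smul_eq {X : Type*} [TopologicalSpace X] {g u h : X → V}
    {s : Set X} (hu : ContinuousOn u s) (hh : ContinuousOn h s) (hnn : ∀ x ∈ s, 0 ≤ ⟪g x, u x⟫)
    (heq : ∀ x ∈ s, (1 + ⟪g x, u x⟫) • g x = h x) : ContinuousOn g s := by
  -- `⟪g, u⟫ ≥ 0` solves `a + a² = ⟪h, u⟫`, hence is given by the quadratic formula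
  have hquad : ∀ x ∈ s, ⟪g x, u x⟫ = (√(1 + 4 * ⟪h x, u x⟫) - 1) / 2 := fun x hx => by
    have : 1 + 4 * ⟪h x, u x⟫ = (1 + 2 * ⟪g x, u x⟫) ^ 2 := by
      rw [← heq x hx, real_inner_smul_left]; ring
    rw [this, sqrt_sq (by linarith [hnn x hx])]; ring
  have hinner : ContinuousOn (fun x => ⟪g x, u x⟫) s :=
    ContinuousOn.congr (by fun_prop) hquad
  have hpos : ∀ x ∈ s, 0 < 1 + ⟪g x, u x⟫ := fun x hx => by linarith [hnn x hx]
  refine (((hinner.const_add 1).inv₀ fun x hx => (hpos x hx).ne').smul hh).congr fun x hx => ?_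
  change g x = (1 + ⟪g x, u x⟫)⁻¹ • h x
  rw [← heq x hx, smul_smul, inv_mul_cancel₀ (hpos x hx).ne', one_smul]

theorem HasDerivWithinAt.inner_apply_self {A : V →ₗ[ℝ] V} (hA : A.IsSymmetric) {u : ℝ → V}
    {u' : V} {s : Set ℝ} {t : ℝ} (hu : HasDerivWithinAt u u' s t)
    (hAu : ContinuousWithinAt (fun r => A (u r)) s t) :
    HasDerivWithinAt (fun r => ⟪A (u r), u r⟫) (2 * ⟪A (u t), u'⟫) s t := by
  rw [hasDerivWithinAt_iff_tendsto_slope] at hu ⊢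
  have hlim := hu.inner (𝕜 := ℝ)
    ((hAu.mono_left (nhdsWithin_mono t sdiff_subset)).add (tendsto_const_nhds (x := A (u t))))
  have hval : ⟪u', A (u t) + A (u t)⟫ = 2 * ⟪A (u t), u'⟫ := by
    rw [inner_add_right, real_inner_comm]; ring
  rw [← hval]
  refine hlim.congr fun r => ?_
  rw [slope_def_module, slope_def_field, real_inner_smul_left, div_eq_inv_mul]
  congr 1
  -- by symmetry, `⟪A v, v⟫ - ⟪A w, w⟫ = ⟪v - w, A v + A w⟫`
  have := hA (u r) (u t)
  rw [inner_sub_left, inner_add_right, inner_add_right, real_inner_comm (A (u r)) (u r),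
    real_inner_comm (A (u t)) (u t), real_inner_comm (A (u r)) (u t)] at *
  linarith

section Pointwise

variable (A : V →ₗ[ℝ] V) {x y g : V} {F : ℝ}

theorem kirchhoff_inner_deriv_le (h : y + (1 + ⟪A x, x⟫) • A x = g) (hg : ‖g‖ ≤ F) :
    2 * ‖y‖ ^ 2 + (2 + 2 * ⟪A x, x⟫) * (2 * ⟪A x, y⟫) ≤ 2 * F ^ 2 := by
  have htest : ‖y‖ ^ 2 + (1 + ⟪A x, x⟫) * ⟪A x, y⟫ = ⟪g, y⟫ := by
    rw [← h, inner_add_left, real_inner_smul_left, real_inner_self_eq_norm_sq]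
  nlinarith [real_inner_le_norm g y, sq_nonneg (‖y‖ - ‖g‖), norm_nonneg g]

theorem kirchhoff_inner_self_le (h : y + (1 + ⟪A x, x⟫) • A x = g) (hg : ‖g‖ ≤ F)
    (hx : 0 ≤ ⟪A x, x⟫) : 2 * ⟪x, y⟫ + (2 + ⟪A x, x⟫) * ⟪A x, x⟫ ≤ 2 * F * ‖x‖ := by
  have htest : ⟪x, y⟫ + (1 + ⟪A x, x⟫) * ⟪A x, x⟫ = ⟪g, x⟫ := by
    rw [← h, inner_add_left, real_inner_smul_left, real_inner_comm]
  nlinarith [real_inner_le_norm g x, norm_nonneg x]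

end Pointwise

section Solution

variable {A : V →ₗ[ℝ] V} {f u u' : ℝ → V} {F μ : ℝ}

theorem norm_sq_le_of_kirchhoff (hμ : 0 < μ) (hcoercive : ∀ v, μ * ‖v‖ ^ 2 ≤ ⟪A v, v⟫)
    (hF : ∀ t ∈ Ici (0 : ℝ), ‖f t‖ ≤ F)
    (hu : ∀ t ∈ Ici (0 : ℝ), HasDerivWithinAt u (u' t) (Ici 0) t)
    (heq : ∀ t ∈ Ici (0 : ℝ), u' t + (1 + ⟪A (u t), u t⟫) • A (u t) = f t) {t : ℝ} (ht : 0 ≤ t) :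
    ‖u t‖ ^ 2 ≤ exp (-μ * t) * ‖u 0‖ ^ 2 + F ^ 2 / μ ^ 2 := by
  have hdecay := le_of_hasDerivWithinAt_le_neg_mul_add (c := F ^ 2 / μ) hμ.ne'
    (fun s hs => (hu s hs).norm_sq) (fun s hs => ?_) ht
  · rw [sub_zero] at hdecay
    have : F ^ 2 / μ / μ = F ^ 2 / μ ^ 2 := by ring
    nlinarith [exp_pos (-μ * t), div_nonneg (sq_nonneg F) (sq_nonneg μ)]
  · have hAu := hcoercive (u s)
    have hinner := kirchhoff_inner_self_le A (heq s hs) (hF s hs)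
      ((mul_nonneg hμ.le (sq_nonneg _)).trans hAu)
    nlinarith [two_mul_mul_le_div_add_mul_sq hμ F ‖u s‖, mul_self_nonneg ⟪A (u s), u s⟫]

theorem kirchhoff_hasDerivWithinAt_inner_apply_self (hA : A.IsSymmetric)
    (hApos : ∀ v, 0 ≤ ⟪A v, v⟫) (hf : ContinuousOn f (Ici 0)) (hu' : ContinuousOn u' (Ici 0))
    (hu : ∀ t ∈ Ici (0 : ℝ), HasDerivWithinAt u (u' t) (Ici 0) t)
    (heq : ∀ t ∈ Ici (0 : ℝ), u' t + (1 + ⟪A (u t), u t⟫) • A (u t) = f t) :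
    ∀ t ∈ Ici (0 : ℝ),
      HasDerivWithinAt (fun s => ⟪A (u s), u s⟫) (2 * ⟪A (u t), u' t⟫) (Ici 0) t := by
  have hAu : ContinuousOn (fun s => A (u s)) (Ici 0) :=
    ContinuousOn.of_one_add_inner_smul_eq (fun s hs => (hu s hs).continuousWithinAt)
      (hf.sub hu') (fun s _ => hApos _) fun s hs => eq_sub_of_add_eq' (heq s hs)
  exact fun t ht => (hu t ht).inner_apply_self hA (hAu t ht)

theorem kirchhoff_energy_le (hA : A.IsSymmetric) (hμ : 0 < μ)
    (hcoercive : ∀ v, μ * ‖v‖ ^ 2 ≤ ⟪A v, v⟫) (hf : ContinuousOn f (Ici 0))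
    (hF : ∀ t ∈ Ici (0 : ℝ), ‖f t‖ ≤ F) (hu' : ContinuousOn u' (Ici 0))
    (hu : ∀ t ∈ Ici (0 : ℝ), HasDerivWithinAt u (u' t) (Ici 0) t)
    (heq : ∀ t ∈ Ici (0 : ℝ), u' t + (1 + ⟪A (u t), u t⟫) • A (u t) = f t)
    {α : ℝ} (hα : 0 < α) (hαμ : 2 * α < μ) {t : ℝ} (ht : 0 ≤ t) :
    2 * exp (-2 * α * t) * (∫ s in (0 : ℝ)..t, exp (2 * α * s) * ‖u' s‖ ^ 2)
        + (2 + ⟪A (u t), u t⟫) * ⟪A (u t), u t⟫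
      ≤ exp (-2 * α * t) * ((2 + ⟪A (u 0), u 0⟫) * ⟪A (u 0), u 0⟫
            + 4 * α * μ / (μ - 2 * α) * ‖u 0‖ ^ 2)
        + (F ^ 2 / α + 2 * (μ + α) * F ^ 2 / μ ^ 2) * (1 - exp (-2 * α * t)) := by
  have hApos : ∀ v, 0 ≤ ⟪A v, v⟫ := fun v => (mul_nonneg hμ.le (sq_nonneg _)).trans (hcoercive v)
  have hμα : 0 < μ - 2 * α := by linarith
  set a := fun s => ⟪A (u s), u s⟫
  set D := fun s => exp (-(2 * α) * s) * ∫ r in (0 : ℝ)..s, exp (2 * α * r) * ‖u' r‖ ^ 2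
  -- `K` is chosen so that `K ‖u 0‖² e^{-μ s}` cancels the decaying part of the bound on `‖u s‖²`
  set K := 2 * α * (2 * α + μ) / (μ - 2 * α)
  have ha := kirchhoff_hasDerivWithinAt_inner_apply_self hA hApos hf hu' hu heq
  have hD : ∀ s ∈ Ici (0 : ℝ), HasDerivWithinAt D (‖u' s‖ ^ 2 - 2 * α * D s) (Ici 0) s :=
    fun s hs => hasDerivWithinAt_exp_mul_integral_exp_mul (by fun_prop) hs
  have hexp : ∀ s, HasDerivWithinAt (fun s => exp (-μ * s)) (exp (-μ * s) * -μ) (Ici 0) s :=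
    fun s => (((hasDerivAt_id s).const_mul (-μ)).exp.hasDerivWithinAt).congr_deriv (by simp)
  have key := le_of_hasDerivWithinAt_le_neg_mul_add
    (y := fun s => (2 + a s) * a s + 2 * α * ‖u s‖ ^ 2 + 2 * D s + K * ‖u 0‖ ^ 2 * exp (-μ * s))
    (c := 2 * F ^ 2 + 2 * α * F ^ 2 / μ + 2 * α * (2 * α + μ) * F ^ 2 / μ ^ 2)
    (by positivity : 2 * α ≠ 0)
    (fun s hs => (((((ha s hs).const_add 2).mul (ha s hs)).add
      ((hu s hs).norm_sq.const_mul _)).add ((hD s hs).const_mul 2)).add ((hexp s).const_mul _))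
    (fun s hs => ?_) ht
  · have hD0 : D 0 = 0 := by simp [D]
    have hc : (2 * F ^ 2 + 2 * α * F ^ 2 / μ + 2 * α * (2 * α + μ) * F ^ 2 / μ ^ 2) / (2 * α)
        = F ^ 2 / α + 2 * (μ + α) * F ^ 2 / μ ^ 2 := by
      field_simp; ring
    have hK : 2 * α + K = 4 * α * μ / (μ - 2 * α) := by simp only [K]; field_simp; ring
    have hrest : 0 ≤ 2 * α * ‖u t‖ ^ 2 + K * ‖u 0‖ ^ 2 * exp (-μ * t) := by positivity
    simp only [sub_zero, mul_zero, exp_zero, hD0, hc] at key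
    simp only [D, show -(2 * α) = -2 * α by ring] at key
    linear_combination key + hrest + exp (-2 * α * t) * ‖u 0‖ ^ 2 * hK
  · have hdiss := kirchhoff_inner_deriv_le A (heq s hs) (hF s hs)
    have htest := kirchhoff_inner_self_le A (heq s hs) (hF s hs) (hApos _)
    have hamgm := two_mul_mul_le_div_add_mul_sq hμ F ‖u s‖
    have hdecay := norm_sq_le_of_kirchhoff hμ hcoercive hF hu heq hs
    have hK : (2 * α - μ) * K = -(2 * α * (2 * α + μ)) := by
      simp only [K]; field_simp; ring
    linear_combination hdiss + 2 * α * htest + 2 * α * hamgm + 2 * α * (2 * α + μ) * hdecay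
      + ‖u 0‖ ^ 2 * exp (-μ * s) * hK

end Solution

end InnerProductSpace

/-- Lemma 3.2: exponentially weighted bound on the time derivative for the semidiscrete
Kirchhoff equation. -/
theorem semidiscrete_apriori_ut
    {V : Type*} [NormedAddCommGroup V] [InnerProductSpace ℝ V]
    (A : V →ₗ[ℝ] V)
    (hsymm : ∀ v w : V, (inner ℝ (A v) w : ℝ) = inner ℝ v (A w))
    (lambda1 : ℝ) (hlambda1 : 0 < lambda1)
    (hcoercive : ∀ v : V, (inner ℝ (A v) v : ℝ) ≥ lambda1 * ‖v‖ ^ 2)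
    (f : ℝ → V) (hf_cont : ContinuousOn f (Ici 0))
    (F : ℝ) (hF : ∀ t ∈ Ici (0 : ℝ), ‖f t‖ ≤ F)
    (u u' : ℝ → V)
    (hu'_cont : ContinuousOn u' (Ici 0))
    (hu_deriv : ∀ t ∈ Ici (0 : ℝ), HasDerivWithinAt u (u' t) (Ici 0) t)
    (heq : ∀ t ∈ Ici (0 : ℝ), u' t + (1 + (inner ℝ (A (u t)) (u t) : ℝ)) • A (u t) = f t)
    (α : ℝ) (hα : 0 < α) (halam : α < lambda1 / 2) (β : ℝ) (hβ : β = 1 - 2 * α / lambda1) :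
    ∀ t ∈ Ici (0 : ℝ),
      2 * exp (-2 * α * t) * (∫ s in (0 : ℝ)..t, exp (2 * α * s) * ‖u' s‖ ^ 2)
          + (2 + (inner ℝ (A (u t)) (u t) : ℝ)) * (inner ℝ (A (u t)) (u t) : ℝ)
        ≤ exp (-2 * α * t) * ((2 + (inner ℝ (A (u 0)) (u 0) : ℝ)) * (inner ℝ (A (u 0)) (u 0) : ℝ))
            + F ^ 2 / α * (1 - exp (-2 * α * t))
            + α * (1 + 4 / β) *
                (exp (-2 * α * t) * ‖u 0‖ ^ 2
                  + F ^ 2 / (2 * α * lambda1) * (1 - exp (-2 * α * t))) := by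
  intro t ht
  have hlam : 0 < lambda1 - 2 * α := by linarith
  have henergy := kirchhoff_energy_le hsymm hlambda1 hcoercive hf_cont hF hu'_cont hu_deriv heq hα
    (by linarith) ht
  have hγ : α * (1 + 4 / β) = α + 4 * α * lambda1 / (lambda1 - 2 * α) := by
    rw [hβ]; field_simp
  have hcoef : 2 * (lambda1 + α) / lambda1 ^ 2 ≤ α * (1 + 4 / β) / (2 * α * lambda1) := by
    have : α * (1 + 4 / β) / (2 * α * lambda1) - 2 * (lambda1 + α) / lambda1 ^ 2
        = (lambda1 ^ 2 + 2 * α * lambda1 + 8 * α ^ 2) / (2 * lambda1 ^ 2 * (lambda1 - 2 * α)) := by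
      rw [hγ]; field_simp [(by linarith : 0 < lambda1 - α * 2).ne']; ring
    rw [← sub_nonneg, this]
    positivity
  have he : exp (-2 * α * t) ≤ 1 := exp_le_one_iff.2 (by nlinarith [mem_Ici.1 ht])
  have hforcing := mul_le_mul_of_nonneg_right hcoef (mul_nonneg (sq_nonneg F) (sub_nonneg.2 he))
  have hn0 : 0 ≤ α * (exp (-2 * α * t) * ‖u 0‖ ^ 2) := by positivity
  linear_combination henergy + hforcing + hn0 - exp (-2 * α * t) * ‖u 0‖ ^ 2 * hγ
end

section
/- Let V be a real inner product space, A : V → V a symmetric linear map with ⟪A v, v⟫ ≥ λ₁‖v‖² for all v ∈ V for some λ₁ > 0, f : [0,∞) → V continuously differentiable, and let u : [0,∞) → V be twice continuously differentiable with u'(t) + (1 + ⟪A u(t), u(t)⟫) · A u(t) = f(t) for all t ≥ 0. Then for every α with 0 < α < λ₁/2, setting β = 1 − 2α/λ₁, for all t ≥ 0: ‖u'(t)‖² + e^{−2αt} ∫₀ᵗ e^{2αs} [ (β + 2⟪A u(s), u(s)⟫)⟪A u'(s), u'(s)⟫ + 4⟪A u'(s), u(s)⟫² ] ds ≤ e^{−2αt}‖u'(0)‖²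 + (1/λ₁) e^{−2αt} ∫₀ᵗ e^{2αs} ‖f'(s)‖² ds. -/
/-!
`A` need not be continuous, so `t ↦ A (u t)` is not differentiable a priori. The equation
repairs this: `a = ⟪A u, u⟫ ≥ 0` solves `a + a² = ⟪f - u', u⟫`, hence
`a = (√(1 + 4⟪f - u', u⟫) - 1) / 2` is differentiable, and so is `A u = (1 + a)⁻¹ • (f - u')`;
by symmetry of `A` its derivative is `A u'`. Differentiating the equation and testing with `u'`
gives `½ (‖u'‖²)' + (1 + a)⟪A u', u'⟫ + 2⟪A u', u⟫² = ⟪f', u'⟫`, and coercivity with Young's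
inequality `2⟪f', u'⟫ ≤ ‖f'‖²/λ₁ + λ₁‖u'‖²` bounds the weighted energy rate; integrating against
`e^{2αs}` ends the proof.
-/

open Set Real

open scoped RealInnerProductSpace

theorem hasDerivWithinAt_of_add_sq_eq {a p : ℝ → ℝ} {p' t : ℝ} {s : Set ℝ}
    (ha : ∀ x ∈ s, 0 ≤ a x) (hap : ∀ x ∈ s, a x + a x ^ 2 = p x)
    (hp : HasDerivWithinAt p p' s t) (ht : t ∈ s) :
    HasDerivWithinAt a (p' / (1 + 2 * a t)) s t := by
  have hsqrt : ∀ x ∈ s, √(1 + 4 * p x) = 1 + 2 * a x := fun x hx => by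
    rw [← hap x hx, show 1 + 4 * (a x + a x ^ 2) = (1 + 2 * a x) ^ 2 by ring,
      sqrt_sq (by linarith [ha x hx])]
  have hroot : HasDerivWithinAt (fun x => (√(1 + 4 * p x) - 1) / 2)
      ((4 * p') / (2 * √(1 + 4 * p t)) / 2) s t :=
    ((((hp.const_mul 4).const_add 1).sqrt (by rw [← hap t ht]; nlinarith [ha t ht])).sub_const
      1).div_const 2
  refine (hroot.congr_of_mem (fun x hx => ?_) ht).congr_deriv ?_
  · rw [hsqrt x hx]; ring
  · rw [hsqrt t ht]; field_simp; ring

section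

variable {V : Type*} [NormedAddCommGroup V] [InnerProductSpace ℝ V] {A : V →ₗ[ℝ] V}

theorem LinearMap.IsSymmetric.apply_eq_of_hasDerivWithinAt (hA : A.IsSymmetric) {u : ℝ → V}
    {u' v : V} {s : Set ℝ} {t : ℝ} (hs : UniqueDiffWithinAt ℝ s t)
    (hu : HasDerivWithinAt u u' s t) (hAu : HasDerivWithinAt (fun x => A (u x)) v s t) :
    A u' = v := by
  refine ext_inner_right ℝ fun w => ?_
  have h₁ : HasDerivWithinAt (fun x => ⟪A (u x), w⟫) ⟪u', A w⟫ s t := by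
    simpa only [hA _ w, inner_zero_right, zero_add] using
      hu.inner ℝ (hasDerivWithinAt_const t s (A w))
  have h₂ : HasDerivWithinAt (fun x => ⟪A (u x), w⟫) ⟪v, w⟫ s t := by
    simpa only [inner_zero_right, zero_add] using hAu.inner ℝ (hasDerivWithinAt_const t s w)
  rw [hA, hs.eq_deriv _ h₁ h₂]

variable {u r : ℝ → V} {s : Set ℝ} {t : ℝ}

theorem hasDerivWithinAt_inner_apply_self_of_smul_eq (hpos : ∀ v, 0 ≤ ⟪A v, v⟫)
    (hr : ∀ x ∈ s, (1 + ⟪A (u x), u x⟫) • A (u x) = r x) {u' r' : V}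
    (hu : HasDerivWithinAt u u' s t) (hr' : HasDerivWithinAt r r' s t) (ht : t ∈ s) :
    HasDerivWithinAt (fun x => ⟪A (u x), u x⟫)
      ((⟪r t, u'⟫ + ⟪r', u t⟫) / (1 + 2 * ⟪A (u t), u t⟫)) s t := by
  refine hasDerivWithinAt_of_add_sq_eq (fun x _ => hpos (u x)) (fun x hx => ?_) (hr'.inner ℝ hu) ht
  rw [← hr x hx, real_inner_smul_left]
  ring

theorem hasDerivWithinAt_apply_of_smul_eq (hpos : ∀ v, 0 ≤ ⟪A v, v⟫)
    (hr : ∀ x ∈ s, (1 + ⟪A (u x), u x⟫) • A (u x) = r x) {a' : ℝ} {r' : V}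
    (ha : HasDerivWithinAt (fun x => ⟪A (u x), u x⟫) a' s t) (hr' : HasDerivWithinAt r r' s t)
    (ht : t ∈ s) :
    HasDerivWithinAt (fun x => A (u x))
      ((1 + ⟪A (u t), u t⟫)⁻¹ • r' + (-a' / (1 + ⟪A (u t), u t⟫) ^ 2) • r t) s t := by
  have hne : ∀ x, 1 + ⟪A (u x), u x⟫ ≠ 0 := fun x => by linarith [hpos (u x)]
  refine (((ha.const_add 1).inv (hne t)).smul hr').congr_of_mem (fun x hx => ?_) ht
  show A (u x) = (1 + ⟪A (u x), u x⟫)⁻¹ • r x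
  rw [← hr x hx, smul_smul, inv_mul_cancel₀ (hne x), one_smul]

theorem deriv_eq_of_smul_eq (hA : A.IsSymmetric) (hpos : ∀ v, 0 ≤ ⟪A v, v⟫)
    (hr : ∀ x ∈ s, (1 + ⟪A (u x), u x⟫) • A (u x) = r x) {u' r' : V}
    (hu : HasDerivWithinAt u u' s t) (hr' : HasDerivWithinAt r r' s t)
    (hs : UniqueDiffWithinAt ℝ s t) (ht : t ∈ s) :
    r' = (1 + ⟪A (u t), u t⟫) • A u' + (2 * ⟪A u', u t⟫) • A (u t) := by
  have hAu := hasDerivWithinAt_apply_of_smul_eq hpos hr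
    (hasDerivWithinAt_inner_apply_self_of_smul_eq hpos hr hu hr' ht) hr' ht
  rw [← hA.apply_eq_of_hasDerivWithinAt hs hu hAu] at hAu
  have ha : HasDerivWithinAt (fun x => ⟪A (u x), u x⟫) (2 * ⟪A u', u t⟫) s t := by
    refine (hAu.inner ℝ hu).congr_deriv ?_
    rw [hA, real_inner_comm]
    ring
  exact hs.eq_deriv _ hr' (((ha.const_add 1).smul hAu).congr_of_mem (fun x hx => (hr x hx).symm) ht)

variable {u' r' : ℝ → V}

theorem continuousOn_inner_apply_self_of_smul_eq (hpos : ∀ v, 0 ≤ ⟪A v, v⟫)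
    (hr : ∀ x ∈ s, (1 + ⟪A (u x), u x⟫) • A (u x) = r x)
    (hu : ∀ x ∈ s, HasDerivWithinAt u (u' x) s x) (hr' : ∀ x ∈ s, HasDerivWithinAt r (r' x) s x) :
    ContinuousOn (fun x => ⟪A (u x), u x⟫) s := fun x hx =>
  (hasDerivWithinAt_inner_apply_self_of_smul_eq hpos hr (hu x hx) (hr' x hx) hx).continuousWithinAt

theorem continuousOn_apply_deriv_of_smul_eq (hA : A.IsSymmetric) (hpos : ∀ v, 0 ≤ ⟪A v, v⟫)
    (hr : ∀ x ∈ s, (1 + ⟪A (u x), u x⟫) • A (u x) = r x)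
    (hu : ∀ x ∈ s, HasDerivWithinAt u (u' x) s x) (hr' : ∀ x ∈ s, HasDerivWithinAt r (r' x) s x)
    (hs : UniqueDiffOn ℝ s) (hu'c : ContinuousOn u' s) (hr'c : ContinuousOn r' s) :
    ContinuousOn (fun x => A (u' x)) s := by
  have hac := continuousOn_inner_apply_self_of_smul_eq hpos hr hu hr'
  have huc : ContinuousOn u s := fun x hx => (hu x hx).continuousWithinAt
  have hrc : ContinuousOn r s := fun x hx => (hr' x hx).continuousWithinAt
  have hne : ∀ x, 1 + ⟪A (u x), u x⟫ ≠ 0 := fun x => by linarith [hpos (u x)]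
  have hne₂ : ∀ x, 1 + 2 * ⟪A (u x), u x⟫ ≠ 0 := fun x => by linarith [hpos (u x)]
  refine ContinuousOn.congr (f := fun x => (1 + ⟪A (u x), u x⟫)⁻¹ • r' x +
      (-((⟪r x, u' x⟫ + ⟪r' x, u x⟫) / (1 + 2 * ⟪A (u x), u x⟫)) / (1 + ⟪A (u x), u x⟫) ^ 2) • r x)
    ?_ fun x hx => hA.apply_eq_of_hasDerivWithinAt (hs x hx) (hu x hx) <|
      hasDerivWithinAt_apply_of_smul_eq hpos hr
        (hasDerivWithinAt_inner_apply_self_of_smul_eq hpos hr (hu x hx) (hr' x hx) hx) (hr' x hx) hx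
  fun_prop (disch := simp [hne, hne₂])

theorem energy_rate_le_of_differentiated_eq (hA : A.IsSymmetric) {lambda1 α : ℝ}
    (hlambda1 : 0 < lambda1) (hα : 0 ≤ α) {v v' v'' g : V}
    (hcoercive : lambda1 * ‖v'‖ ^ 2 ≤ ⟪A v', v'⟫)
    (heq : v'' + ((1 + ⟪A v, v⟫) • A v' + (2 * ⟪A v', v⟫) • A v) = g) :
    2 * α * ‖v'‖ ^ 2 + 2 * ⟪v', v''⟫
        + ((1 - 2 * α / lambda1 + 2 * ⟪A v, v⟫) * ⟪A v', v'⟫ + 4 * ⟪A v', v⟫ ^ 2)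
      ≤ 1 / lambda1 * ‖g‖ ^ 2 := by
  have hv'' : ⟪v', v''⟫ = ⟪v', g⟫ - (1 + ⟪A v, v⟫) * ⟪A v', v'⟫ - 2 * ⟪A v', v⟫ ^ 2 := by
    rw [← heq, inner_add_right, inner_add_right, real_inner_smul_right, real_inner_smul_right,
      real_inner_comm (A v'), ← hA]
    ring
  have hyoung : 2 * ⟪v', g⟫ ≤ 1 / lambda1 * ‖g‖ ^ 2 + lambda1 * ‖v'‖ ^ 2 := by
    have hsq : 0 ≤ (‖g‖ - lambda1 * ‖v'‖) ^ 2 / lambda1 := by positivity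
    have hsq_eq : (‖g‖ - lambda1 * ‖v'‖) ^ 2 / lambda1
        = 1 / lambda1 * ‖g‖ ^ 2 + lambda1 * ‖v'‖ ^ 2 - 2 * (‖v'‖ * ‖g‖) := by
      field_simp
      ring
    linarith [real_inner_le_norm v' g]
  have hcoer : (1 + 2 * α / lambda1) * (lambda1 * ‖v'‖ ^ 2) ≤ (1 + 2 * α / lambda1) * ⟪A v', v'⟫ :=
    mul_le_mul_of_nonneg_left hcoercive (by positivity)
  have hcoer_eq : (1 + 2 * α / lambda1) * (lambda1 * ‖v'‖ ^ 2)
      = lambda1 * ‖v'‖ ^ 2 + 2 * α * ‖v'‖ ^ 2 := by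
    field_simp
  rw [hv'']
  linarith

end

theorem add_exp_mul_integral_le {y y' k l : ℝ → ℝ} {α M t : ℝ} (ht : 0 ≤ t)
    (hy : ContinuousOn y (Icc 0 t)) (hy' : ∀ s ∈ Ioo 0 t, HasDerivAt y (y' s) s)
    (hk : ContinuousOn k (Icc 0 t)) (hl : ContinuousOn l (Icc 0 t))
    (hle : ∀ s ∈ Ioo 0 t, 2 * α * y s + y' s + k s ≤ M * l s) :
    y t + exp (-2 * α * t) * ∫ s in (0 : ℝ)..t, exp (2 * α * s) * k s
      ≤ exp (-2 * α * t) * y 0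
          + M * exp (-2 * α * t) * ∫ s in (0 : ℝ)..t, exp (2 * α * s) * l s := by
  have hw : Continuous fun s : ℝ => exp (2 * α * s) := by fun_prop
  have hwk : IntervalIntegrable (fun s => exp (2 * α * s) * k s) MeasureTheory.volume 0 t :=
    (hw.continuousOn.mul (uIcc_of_le ht ▸ hk)).intervalIntegrable
  have hwl : IntervalIntegrable (fun s => exp (2 * α * s) * l s) MeasureTheory.volume 0 t :=
    (hw.continuousOn.mul (uIcc_of_le ht ▸ hl)).intervalIntegrable
  have hgrowth := intervalIntegral.sub_le_integral_of_hasDeriv_right_of_le ht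
    (g := fun s => exp (2 * α * s) * y s)
    (φ := fun s => M * (exp (2 * α * s) * l s) - exp (2 * α * s) * k s)
    (hw.continuousOn.mul hy)
    (fun s hs => ((((hasDerivAt_id s).const_mul (2 * α)).exp).mul (hy' s hs)).hasDerivWithinAt)
    ((((hw.continuousOn.mul hl).const_smul M).sub (hw.continuousOn.mul hk)).integrableOn_Icc)
    (fun s hs => by
      have := mul_le_mul_of_nonneg_left (hle s hs) (exp_pos (2 * α * s)).le
      simp only [id]
      linear_combination this)
  rw [intervalIntegral.integral_sub (hwl.const_mul M) hwk, intervalIntegral.integral_const_mul,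
    mul_zero, exp_zero, one_mul] at hgrowth
  have hinv : exp (-2 * α * t) * exp (2 * α * t) = 1 := by
    rw [← exp_add, neg_mul, neg_mul, neg_add_cancel, exp_zero]
  linear_combination mul_le_mul_of_nonneg_left hgrowth (exp_pos (-2 * α * t)).le - y t * hinv

theorem semidiscrete_apriori_ut_H1_general
    {V : Type*} [NormedAddCommGroup V] [InnerProductSpace ℝ V]
    (A : V →ₗ[ℝ] V)
    (hsymm : ∀ v w : V, (inner ℝ (A v) w : ℝ) = inner ℝ v (A w))
    (lambda1 : ℝ) (hlambda1 : 0 < lambda1)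
    (hcoercive : ∀ v : V, (inner ℝ (A v) v : ℝ) ≥ lambda1 * ‖v‖ ^ 2)
    (f f' : ℝ → V)
    (hf'_cont : ContinuousOn f' (Ici 0))
    (hf_deriv : ∀ t ∈ Ici (0 : ℝ), HasDerivWithinAt f (f' t) (Ici 0) t)
    (u u' u'' : ℝ → V)
    (hu''_cont : ContinuousOn u'' (Ici 0))
    (hu_deriv : ∀ t ∈ Ici (0 : ℝ), HasDerivWithinAt u (u' t) (Ici 0) t)
    (hu'_deriv : ∀ t ∈ Ici (0 : ℝ), HasDerivWithinAt u' (u'' t) (Ici 0) t)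
    (heq : ∀ t ∈ Ici (0 : ℝ), u' t + (1 + (inner ℝ (A (u t)) (u t) : ℝ)) • A (u t) = f t)
    (α : ℝ) (hα : 0 < α) (β : ℝ) (hβ : β = 1 - 2 * α / lambda1) :
    ∀ t ∈ Ici (0 : ℝ),
      ‖u' t‖ ^ 2
          + exp (-2 * α * t) *
              (∫ s in (0 : ℝ)..t,
                exp (2 * α * s) *
                  ((β + 2 * (inner ℝ (A (u s)) (u s) : ℝ)) * (inner ℝ (A (u' s)) (u' s) : ℝ)
                    + 4 * (inner ℝ (A (u' s)) (u s) : ℝ) ^ 2))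
        ≤ exp (-2 * α * t) * ‖u' 0‖ ^ 2
            + (1 / lambda1) * exp (-2 * α * t) *
                (∫ s in (0 : ℝ)..t, exp (2 * α * s) * ‖f' s‖ ^ 2) := by
  subst hβ
  intro t ht
  have hpos : ∀ v, 0 ≤ ⟪A v, v⟫ := fun v =>
    (by positivity : 0 ≤ lambda1 * ‖v‖ ^ 2).trans (hcoercive v)
  have hr : ∀ x ∈ Ici (0 : ℝ), (1 + ⟪A (u x), u x⟫) • A (u x) = f x - u' x :=
    fun x hx => eq_sub_of_add_eq' (heq x hx)
  have hr' : ∀ x ∈ Ici (0 : ℝ), HasDerivWithinAt (fun x => f x - u' x) (f' x - u'' x) (Ici 0) x :=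
    fun x hx => (hf_deriv x hx).sub (hu'_deriv x hx)
  have huc : ContinuousOn u (Ici 0) := fun x hx => (hu_deriv x hx).continuousWithinAt
  have hu'c : ContinuousOn u' (Ici 0) := fun x hx => (hu'_deriv x hx).continuousWithinAt
  have hac := continuousOn_inner_apply_self_of_smul_eq hpos hr hu_deriv hr'
  have hAu'c := continuousOn_apply_deriv_of_smul_eq hsymm hpos hr hu_deriv hr' (uniqueDiffOn_Ici 0)
    hu'c (hf'_cont.sub hu''_cont)
  refine add_exp_mul_integral_le (y := fun s => ‖u' s‖ ^ 2)
    (y' := fun s => 2 * ⟪u' s, u'' s⟫) (l := fun s => ‖f' s‖ ^ 2) ht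
    ((hu'c.norm.pow 2).mono Icc_subset_Ici_self) (fun s hs => ?_)
    (ContinuousOn.mono ?_ Icc_subset_Ici_self)
    ((hf'_cont.norm.pow 2).mono Icc_subset_Ici_self) (fun s hs => ?_)
  · exact ((hu'_deriv s hs.1.le).hasDerivAt (Ici_mem_nhds hs.1)).norm_sq
  · exact ((continuousOn_const.add (continuousOn_const.mul hac)).mul (hAu'c.inner hu'c)).add
      (continuousOn_const.mul ((hAu'c.inner huc).pow 2))
  · refine energy_rate_le_of_differentiated_eq hsymm hlambda1 hα.le (hcoercive _) ?_
    rw [← deriv_eq_of_smul_eq hsymm hpos hr (hu_deriv s hs.1.le) (hr' s hs.1.le)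
      (uniqueDiffOn_Ici 0 s hs.1.le) hs.1.le]
    abel

/-- Abstract form of the first estimate of Lemma 2.4: exponentially weighted bound on
`‖u'(t)‖` obtained by differentiating the Kirchhoff equation in time. -/
theorem semidiscrete_apriori_ut_H1
    {V : Type*} [NormedAddCommGroup V] [InnerProductSpace ℝ V]
    (A : V →ₗ[ℝ] V)
    (hsymm : ∀ v w : V, (inner ℝ (A v) w : ℝ) = inner ℝ v (A w))
    (lambda1 : ℝ) (hlambda1 : 0 < lambda1)
    (hcoercive : ∀ v : V, (inner ℝ (A v) v : ℝ) ≥ lambda1 * ‖v‖ ^ 2)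
    (f f' : ℝ → V)
    (hf'_cont : ContinuousOn f' (Ici 0))
    (hf_deriv : ∀ t ∈ Ici (0 : ℝ), HasDerivWithinAt f (f' t) (Ici 0) t)
    (u u' u'' : ℝ → V)
    (hu''_cont : ContinuousOn u'' (Ici 0))
    (hu_deriv : ∀ t ∈ Ici (0 : ℝ), HasDerivWithinAt u (u' t) (Ici 0) t)
    (hu'_deriv : ∀ t ∈ Ici (0 : ℝ), HasDerivWithinAt u' (u'' t) (Ici 0) t)
    (heq : ∀ t ∈ Ici (0 : ℝ), u' t + (1 + (inner ℝ (A (u t)) (u t) : ℝ)) • A (u t) = f t)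
    (α : ℝ) (hα : 0 < α) (halam : α < lambda1 / 2) (β : ℝ) (hβ : β = 1 - 2 * α / lambda1) :
    ∀ t ∈ Ici (0 : ℝ),
      ‖u' t‖ ^ 2
          + exp (-2 * α * t) *
              (∫ s in (0 : ℝ)..t,
                exp (2 * α * s) *
                  ((β + 2 * (inner ℝ (A (u s)) (u s) : ℝ)) * (inner ℝ (A (u' s)) (u' s) : ℝ)
                    + 4 * (inner ℝ (A (u' s)) (u s) : ℝ) ^ 2))
        ≤ exp (-2 * α * t) * ‖u' 0‖ ^ 2
            + (1 / lambda1) * exp (-2 * α * t) *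
                (∫ s in (0 : ℝ)..t, exp (2 * α * s) * ‖f' s‖ ^ 2) :=
  semidiscrete_apriori_ut_H1_general A hsymm lambda1 hlambda1 hcoercive f f' hf'_cont hf_deriv u u'
    u'' hu''_cont hu_deriv hu'_deriv heq α hα β hβ
end

section
/- Let V be a real inner product space, A : V → V a linear map with ⟪A v, v⟫ ≥ 0 for all v ∈ V, k > 0, N ≥ 1, and let U⁰, U¹, …, U^N ∈ V and f¹, …, f^N ∈ V satisfy (Uⁿ − Uⁿ⁻¹)/k + (1 + ⟪A Uⁿ, Uⁿ⟫) · A Uⁿ = fⁿ for n = 1, …, N. Then ‖U^N‖ ≤ ‖U⁰‖ + 2k ∑_{n=1}^{N} ‖fⁿ‖. -/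
/-! Pairing the scheme with `Uⁿ` kills the Kirchhoff term, since `⟪(1 + ⟪A u, u⟫) • A u, u⟫ ≥ 0`.
What remains is `‖Uⁿ‖² ≤ ⟪Uⁿ⁻¹ + k fⁿ, Uⁿ⟫`, so by Cauchy–Schwarz `‖Uⁿ‖ ≤ ‖Uⁿ⁻¹‖ + k ‖fⁿ‖`,
and summing these one-step bounds gives the estimate (even with `k` in place of `2k`). -/

open Finset

section InnerProductSpace

variable {V : Type*} [NormedAddCommGroup V] [InnerProductSpace ℝ V]

theorem norm_le_norm_add_norm_of_inner_sub_le {u v g : V}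
    (h : inner ℝ (u - v) u ≤ inner ℝ g u) : ‖u‖ ≤ ‖v‖ + ‖g‖ := by
  have hsq : ‖u‖ * ‖u‖ ≤ ‖v + g‖ * ‖u‖ :=
    calc ‖u‖ * ‖u‖ = inner ℝ u u := (real_inner_self_eq_norm_mul_norm u).symm
      _ ≤ inner ℝ (v + g) u := by
        rw [inner_sub_left] at h
        rw [inner_add_left]
        linarith
      _ ≤ ‖v + g‖ * ‖u‖ := real_inner_le_norm _ _
  rcases (norm_nonneg u).eq_or_lt with hu | hu
  · rw [← hu]
    positivity
  · exact (le_of_mul_le_mul_right hsq hu).trans (norm_add_le v g)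

theorem norm_le_of_implicit_euler_step {u v w f : V} {k : ℝ} (hk : 0 < k)
    (hw : 0 ≤ inner ℝ w u) (hstep : (1 / k) • (u - v) + w = f) :
    ‖u‖ ≤ ‖v‖ + k * ‖f‖ := by
  have hinner : (1 / k) * inner ℝ (u - v) u + inner ℝ w u = inner ℝ f u := by
    rw [← hstep, inner_add_left, real_inner_smul_left]
  have hdiff : inner ℝ (u - v) u ≤ inner ℝ (k • f) u := by
    rw [real_inner_smul_left, ← hinner, mul_add, ← mul_assoc, mul_one_div_cancel hk.ne', one_mul]
    nlinarith
  simpa [norm_smul, abs_of_pos hk] using norm_le_norm_add_norm_of_inner_sub_le hdiff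

theorem inner_kirchhoff_smul_nonneg (A : V →ₗ[ℝ] V) (hpos : ∀ v : V, 0 ≤ inner ℝ (A v) v)
    (u : V) : 0 ≤ inner ℝ ((1 + inner ℝ (A u) u) • A u) u := by
  rw [real_inner_smul_left]
  have := hpos u
  positivity

end InnerProductSpace

theorem le_add_sum_Icc_of_le_pred_add {a c : ℕ → ℝ} {N : ℕ}
    (h : ∀ n, 1 ≤ n → n ≤ N → a n ≤ a (n - 1) + c n) :
    a N ≤ a 0 + ∑ n ∈ Icc 1 N, c n := by
  induction N with
  | zero => simp
  | succ m ih =>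
    rw [sum_Icc_succ_top (by omega)]
    have hlast := h (m + 1) (by omega) le_rfl
    have hprev := ih fun n hn hnm => h n hn (by omega)
    rw [Nat.add_sub_cancel] at hlast
    linarith

theorem backward_euler_stability_general
    {V : Type*} [NormedAddCommGroup V] [InnerProductSpace ℝ V]
    (A : V →ₗ[ℝ] V)
    (hpos : ∀ v : V, (0 : ℝ) ≤ inner ℝ (A v) v)
    (k : ℝ) (hk : 0 < k) (N : ℕ)
    (U : ℕ → V) (f : ℕ → V)
    (hscheme : ∀ n, 1 ≤ n → n ≤ N →
      (1 / k) • (U n - U (n - 1)) + (1 + (inner ℝ (A (U n)) (U n) : ℝ)) • A (U n) = f n) :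
    ‖U N‖ ≤ ‖U 0‖ + 2 * k * ∑ n ∈ Finset.Icc 1 N, ‖f n‖ := by
  have hstep : ∀ n, 1 ≤ n → n ≤ N → ‖U n‖ ≤ ‖U (n - 1)‖ + k * ‖f n‖ := fun n hn hnN =>
    norm_le_of_implicit_euler_step hk (inner_kirchhoff_smul_nonneg A hpos (U n))
      (hscheme n hn hnN)
  have hsum := le_add_sum_Icc_of_le_pred_add (a := fun n => ‖U n‖) hstep
  have hforcing : 0 ≤ k * ∑ n ∈ Icc 1 N, ‖f n‖ := by positivity
  rw [← mul_sum] at hsum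
  linarith

/-- Lemma 4.1: unconditional stability of the backward Euler scheme for the Kirchhoff
parabolic equation. -/
theorem backward_euler_stability
    {V : Type*} [NormedAddCommGroup V] [InnerProductSpace ℝ V]
    (A : V →ₗ[ℝ] V)
    (hpos : ∀ v : V, (0 : ℝ) ≤ inner ℝ (A v) v)
    (k : ℝ) (hk : 0 < k) (N : ℕ) (hN : 1 ≤ N)
    (U : ℕ → V) (f : ℕ → V)
    (hscheme : ∀ n, 1 ≤ n → n ≤ N →
      (1 / k) • (U n - U (n - 1)) + (1 + (inner ℝ (A (U n)) (U n) : ℝ)) • A (U n) = f n) :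
    ‖U N‖ ≤ ‖U 0‖ + 2 * k * ∑ n ∈ Finset.Icc 1 N, ‖f n‖ :=
  backward_euler_stability_general A hpos k hk N U f hscheme
end

section
/- Let k > 0, let N ≥ 1, and let a₀, a₁, …, a_N and b₁, …, b_N be nonnegative real numbers such that for every n with 1 ≤ n ≤ N one has aₙ² ≤ a₀² + 2k ∑_{j=1}^{n} b_j a_j. Then a_N ≤ a₀ + 2k ∑_{n=1}^{N} bₙ. -/
/-- The discrete stability lemma used in the proof of Lemma 4.1. -/
theorem discrete_stability_lemma
    (k : ℝ) (hk : 0 < k) (N : ℕ) (hN : 1 ≤ N)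
    (a : ℕ → ℝ) (b : ℕ → ℝ)
    (ha : ∀ n, n ≤ N → 0 ≤ a n)
    (hb : ∀ n, 1 ≤ n → n ≤ N → 0 ≤ b n)
    (h : ∀ n, 1 ≤ n → n ≤ N →
      a n ^ 2 ≤ a 0 ^ 2 + 2 * k * ∑ j ∈ Finset.Icc 1 n, b j * a j) :
    a N ≤ a 0 + 2 * k * ∑ n ∈ Finset.Icc 1 N, b n := by
  obtain ⟨m, hm, hmax⟩ := Finset.exists_max_image (Finset.range (N + 1)) a ⟨0, by simp⟩
  simp only [Finset.mem_range, Nat.lt_succ_iff] at hm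
  have hmN : a N ≤ a m := hmax N (by simp)
  have hSb : (0:ℝ) ≤ ∑ n ∈ Finset.Icc 1 N, b n :=
    Finset.sum_nonneg fun j hj => by
      rw [Finset.mem_Icc] at hj; exact hb j hj.1 hj.2
  have h0m : a 0 ≤ a m := hmax 0 (by simp)
  have hM : a m ≤ a 0 + 2 * k * ∑ n ∈ Finset.Icc 1 N, b n := by
    rcases Nat.eq_zero_or_pos m with hm0 | hm1
    · rw [hm0]; nlinarith
    · have h1 := h m hm1 hm
      have h2 : ∑ j ∈ Finset.Icc 1 m, b j * a j ≤
          a m * ∑ n ∈ Finset.Icc 1 N, b n := by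
        calc ∑ j ∈ Finset.Icc 1 m, b j * a j
            ≤ ∑ j ∈ Finset.Icc 1 m, b j * a m := by
              apply Finset.sum_le_sum
              intro j hj
              rw [Finset.mem_Icc] at hj
              exact mul_le_mul_of_nonneg_left
                (hmax j (by simp [Nat.lt_succ_iff]; omega))
                (hb j hj.1 (le_trans hj.2 hm))
          _ = (∑ j ∈ Finset.Icc 1 m, b j) * a m := by rw [← Finset.sum_mul]
          _ ≤ (∑ n ∈ Finset.Icc 1 N, b n) * a m := by
              apply mul_le_mul_of_nonneg_right _ (ha m hm)
              apply Finset.sum_le_sum_of_subset_of_nonneg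
              · exact Finset.Icc_subset_Icc_right hm
              · intro j hj _
                rw [Finset.mem_Icc] at hj
                exact hb j hj.1 hj.2
          _ = a m * ∑ n ∈ Finset.Icc 1 N, b n := mul_comm _ _
      have h3 : a m ^ 2 ≤ a 0 ^ 2 + 2 * k * (a m * ∑ n ∈ Finset.Icc 1 N, b n) := by
        nlinarith
      rcases eq_or_lt_of_le (ha m hm) with hz | hz
      · rw [← hz]; have : 0 ≤ a 0 := ha 0 (by omega); nlinarith
      · nlinarith [ha 0 (Nat.zero_le N)]
  linarith
end

section
/- Let V be a real inner product space, A : V → V a symmetric linear map (⟪A v, w⟫ = ⟪v, A w⟫) with ⟪A v, v⟫ ≥ 0 for all v, w ∈ V, k > 0, and suppose Uⁿ⁻¹, Uⁿ, fⁿ ∈ V satisfy (Uⁿ − Uⁿ⁻¹)/k + (1 + ⟪A Uⁿ, Uⁿ⟫) · A Uⁿ = fⁿ. Then (⟪A Uⁿ, Uⁿ⟫ − ⟪A Uⁿ⁻¹, Uⁿ⁻¹⟫)/k + (1 + ⟪A Uⁿ, Uⁿ⟫) ‖A Uⁿ‖² ≤ ‖fⁿ‖². -/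
/-!
Pair the scheme with `A Uⁿ`. For symmetric `A` the difference quotient obeys the discrete chain
rule `2⟪Uⁿ - Uⁿ⁻¹, A Uⁿ⟫ = ⟪A Uⁿ, Uⁿ⟫ - ⟪A Uⁿ⁻¹, Uⁿ⁻¹⟫ + ⟪A (Uⁿ - Uⁿ⁻¹), Uⁿ - Uⁿ⁻¹⟫`, whose last
term is nonnegative, and Young's inequality `⟪fⁿ, A Uⁿ⟫ ≤ (‖fⁿ‖² + ‖A Uⁿ‖²) / 2` absorbs the
right-hand side into the term `(1 + ⟪A Uⁿ, Uⁿ⟫) ‖A Uⁿ‖²`.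
-/

section

open RealInnerProductSpace

variable {E : Type*} [NormedAddCommGroup E] [InnerProductSpace ℝ E]

theorem real_inner_le_half_add_sq (x y : E) : ⟪x, y⟫ ≤ (‖x‖ ^ 2 + ‖y‖ ^ 2) / 2 := by
  linarith [real_inner_le_norm x y, two_mul_le_add_sq ‖x‖ ‖y‖]

namespace LinearMap

theorem IsSymmetric.two_mul_inner_sub_map_self {T : E →ₗ[ℝ] E} (hT : T.IsSymmetric) (x y : E) :
    2 * ⟪x - y, T x⟫ = ⟪T x, x⟫ - ⟪T y, y⟫ + ⟪T (x - y), x - y⟫ := by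
  simp only [map_sub, inner_sub_left, inner_sub_right, hT y x, real_inner_comm x (T x),
    real_inner_comm y (T x)]
  ring

theorem IsPositive.inner_map_self_sub_le {T : E →ₗ[ℝ] E} (hT : T.IsPositive) (x y : E) :
    ⟪T x, x⟫ - ⟪T y, y⟫ ≤ 2 * ⟪x - y, T x⟫ := by
  linarith [hT.isSymmetric.two_mul_inner_sub_map_self x y, hT.inner_nonneg_left (x - y)]

end LinearMap

end

/-- Remark 4.1, estimate (4.6): energy estimate for one step of the backward Euler
scheme tested against `A Uⁿ`. -/
theorem backward_euler_gradient_estimate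
    {V : Type*} [NormedAddCommGroup V] [InnerProductSpace ℝ V]
    (A : V →ₗ[ℝ] V)
    (hsymm : ∀ v w : V, (inner ℝ (A v) w : ℝ) = inner ℝ v (A w))
    (hpos : ∀ v : V, (0 : ℝ) ≤ inner ℝ (A v) v)
    (k : ℝ) (hk : 0 < k)
    (Uprev Un fn : V)
    (hscheme : (1 / k) • (Un - Uprev) + (1 + (inner ℝ (A Un) Un : ℝ)) • A Un = fn) :
    ((inner ℝ (A Un) Un : ℝ) - (inner ℝ (A Uprev) Uprev : ℝ)) / k
        + (1 + (inner ℝ (A Un) Un : ℝ)) * ‖A Un‖ ^ 2 ≤ ‖fn‖ ^ 2 := by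
  have hA : A.IsPositive := A.isPositive_iff.mpr ⟨hsymm, hpos⟩
  have htest : inner ℝ (Un - Uprev) (A Un) / k + (1 + inner ℝ (A Un) Un) * ‖A Un‖ ^ 2
      = inner ℝ fn (A Un) := by
    rw [← hscheme, inner_add_left, real_inner_smul_left, real_inner_smul_left,
      real_inner_self_eq_norm_sq, one_div_mul_eq_div]
  have hchain : (inner ℝ (A Un) Un - inner ℝ (A Uprev) Uprev) / k
      ≤ 2 * (inner ℝ (Un - Uprev) (A Un) / k) := by
    rw [← mul_div_assoc]
    exact div_le_div_of_nonneg_right (hA.inner_map_self_sub_le Un Uprev) hk.le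
  have hyoung := real_inner_le_half_add_sq fn (A Un)
  have hdamp : 0 ≤ inner ℝ (A Un) Un * ‖A Un‖ ^ 2 := mul_nonneg (hpos Un) (sq_nonneg _)
  linarith
end

section
/- Let V be a finite-dimensional real inner product space and A : V → V a linear map with ⟪A v, v⟫ ≥ 0 for all v ∈ V. Then for every k > 0 and every g ∈ V there exists W ∈ V such that W + k(1 + ⟪A W, W⟫) · A W = g. -/
/-!
The equation is nonlinear only through the scalar `s = ⟪A W, W⟫`. Freezing that scalar leaves the
linear problem `w + c • A w = g` with `c = k (1 + s) ≥ 0`, which is uniquely solvable because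
`1 + c • A` is coercive. Its solution `W s` depends continuously on `s`, and the energy identity
`⟪g, w⟫ = ‖w‖² + c ⟪A w, w⟫` bounds `⟪A (W s), W s⟫` by `‖g‖² / (4 k)`. The intermediate value theorem
then gives a fixed point of `s ↦ ⟪A (W s), W s⟫` on `[0, ‖g‖² / (4 k)]`, and `W s` solves the equation.
-/

open Set
open scoped RealInnerProductSpace

namespace BackwardEuler

variable {V : Type*} [NormedAddCommGroup V] [InnerProductSpace ℝ V]

section Energy

variable {w a g : V} {c : ℝ}

lemma inner_eq_of_add_smul_eq (h : w + c • a = g) : ⟪g, w⟫ = ‖w‖ ^ 2 + c * ⟪a, w⟫ := by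
  rw [← h, inner_add_left, real_inner_smul_left, real_inner_self_eq_norm_sq]

lemma mul_inner_le_of_add_smul_eq (h : w + c • a = g) : c * ⟪a, w⟫ ≤ ‖g‖ ^ 2 / 4 := by
  have henergy := inner_eq_of_add_smul_eq h
  have hcs := real_inner_le_norm g w
  nlinarith [sq_nonneg (‖w‖ - ‖g‖ / 2)]

end Energy

section Resolvent

variable [CompleteSpace V] {A : V →L[ℝ] V} {c : ℝ}

lemma isUnit_one_add_smul (hA : ∀ v, 0 ≤ ⟪A v, v⟫) (hc : 0 ≤ c) : IsUnit (1 + c • A) := by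
  refine ContinuousLinearMap.isUnit_of_forall_le_norm_inner_map _ one_pos fun v ↦ ?_
  have henergy : ⟪(1 + c • A) v, v⟫ = ‖v‖ ^ 2 + c * ⟪A v, v⟫ := inner_eq_of_add_smul_eq rfl
  rw [henergy, NNReal.coe_one, mul_one, Real.norm_eq_abs]
  exact (le_add_of_nonneg_right (mul_nonneg hc (hA v))).trans (le_abs_self _)

lemma inverse_one_add_smul_apply_add (hA : ∀ v, 0 ≤ ⟪A v, v⟫) (hc : 0 ≤ c) (g : V) :
    Ring.inverse (1 + c • A) g + c • A (Ring.inverse (1 + c • A) g) = g := by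
  simpa using congrArg (· g) (Ring.mul_inverse_cancel _ (isUnit_one_add_smul hA hc))

lemma continuousOn_inverse_one_add_smul (hA : ∀ v, 0 ≤ ⟪A v, v⟫) :
    ContinuousOn (fun c : ℝ ↦ Ring.inverse (1 + c • A)) (Ici 0) := fun c hc ↦
  ContinuousAt.continuousWithinAt <| ContinuousAt.comp (g := Ring.inverse)
    (by simpa using NormedRing.inverse_continuousAt (isUnit_one_add_smul hA hc).unit)
    (continuous_const.add (continuous_id.smul continuous_const)).continuousAt

end Resolvent

end BackwardEuler

open BackwardEuler

/-- Existence part of Theorem 5.2: solvability of one backward Euler step via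
Brouwer's fixed point theorem. -/
theorem backward_euler_existence
    {V : Type*} [NormedAddCommGroup V] [InnerProductSpace ℝ V] [FiniteDimensional ℝ V]
    (A : V →ₗ[ℝ] V)
    (hpos : ∀ v : V, (0 : ℝ) ≤ inner ℝ (A v) v)
    (k : ℝ) (hk : 0 < k) (g : V) :
    ∃ W : V, W + (k * (1 + (inner ℝ (A W) W : ℝ))) • A W = g := by
  set B := LinearMap.toContinuousLinearMap A
  have hB : ∀ v, 0 ≤ ⟪B v, v⟫ := hpos
  set c : ℝ → ℝ := fun s ↦ k * (1 + s)
  have hc : ∀ s, 0 ≤ s → 0 ≤ c s := fun s hs ↦ by positivity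
  set W : ℝ → V := fun s ↦ Ring.inverse (1 + c s • B) g
  have hW : ∀ s, 0 ≤ s → W s + c s • B (W s) = g := fun s hs ↦
    inverse_one_add_smul_apply_add hB (hc s hs) g
  have hWcont : ContinuousOn W (Ici 0) :=
    (ContinuousLinearMap.apply ℝ V g).continuous.comp_continuousOn <|
      (continuousOn_inverse_one_add_smul hB).comp (by fun_prop) hc
  set M := ‖g‖ ^ 2 / (4 * k)
  have hM : 0 ≤ M := by positivity
  have hbound : ⟪B (W M), W M⟫ ≤ M := by
    have h := mul_inner_le_of_add_smul_eq (hW M hM)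
    rw [le_div_iff₀ (by positivity)]
    nlinarith [hB (W M)]
  obtain ⟨s, hs, hfix⟩ := exists_mem_Icc_isFixedPt (f := fun s ↦ ⟪B (W s), W s⟫)
    ((B.continuous.comp_continuousOn hWcont).inner hWcont |>.mono Icc_subset_Ici_self)
    hM (hB _) hbound
  refine ⟨W s, ?_⟩
  rw [show ⟪A (W s), W s⟫ = s from hfix]
  exact hW s hs.1
end

section
/- Let V be a real inner product space and A : V → V a symmetric linear map (⟪A v, w⟫ = ⟪v, A w⟫) with ⟪A v, v⟫ ≥ 0 for all v, w ∈ V. Then for every k > 0 and g ∈ V, if W₁, W₂ ∈ V both satisfy W + k(1 + ⟪A W, W⟫) · A W = g, then W₁ = W₂. -/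
/-!
The map `F W = k (1 + ⟪A W, W⟫) A W` is monotone, `⟪F u - F v, u - v⟫ ≥ 0` (Lemma 2.6):
for `A` this is positivity of `A (u - v)`, and for `W ↦ ⟪A W, W⟫ A W` it follows from
`2 ⟪A u, v⟫ ≤ ⟪A u, u⟫ + ⟪A v, v⟫`, which leaves `(⟪A u, u⟫ - ⟪A v, v⟫)² / 2 ≥ 0`.
Pairing `W₁ + F W₁ = W₂ + F W₂` with `W₁ - W₂` then gives `‖W₁ - W₂‖² ≤ 0`.
-/

open scoped RealInnerProductSpace

section

variable {E : Type*} [NormedAddCommGroup E] [InnerProductSpace ℝ E]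

def IsMonotoneOperator (F : E → E) : Prop :=
  ∀ u v, 0 ≤ ⟪F u - F v, u - v⟫

namespace IsMonotoneOperator

variable {F G : E → E}

theorem add (hF : IsMonotoneOperator F) (hG : IsMonotoneOperator G) :
    IsMonotoneOperator (fun v ↦ F v + G v) := by
  intro u v
  rw [add_sub_add_comm, inner_add_left]
  exact add_nonneg (hF u v) (hG u v)

theorem const_smul (hF : IsMonotoneOperator F) {c : ℝ} (hc : 0 ≤ c) :
    IsMonotoneOperator (fun v ↦ c • F v) := by
  intro u v
  rw [← smul_sub, real_inner_smul_left]
  exact mul_nonneg hc (hF u v)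

theorem injective_id_add (hF : IsMonotoneOperator F) : Function.Injective (fun v ↦ v + F v) := by
  intro u v huv
  have hdiff : u - v = -(F u - F v) := by
    simp only at huv
    rw [neg_sub, sub_eq_sub_iff_add_eq_add, huv, add_comm]
  have hnonpos : ⟪u - v, u - v⟫ ≤ 0 :=
    calc ⟪u - v, u - v⟫ = ⟪-(F u - F v), u - v⟫ := by rw [← hdiff]
      _ = -⟪F u - F v, u - v⟫ := inner_neg_left _ _
      _ ≤ 0 := neg_nonpos.mpr (hF u v)
  exact sub_eq_zero.mp (inner_self_eq_zero.mp (le_antisymm hnonpos real_inner_self_nonneg))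

end IsMonotoneOperator

namespace LinearMap.IsPositive

variable {A : E →ₗ[ℝ] E}

theorem isMonotoneOperator (hA : A.IsPositive) : IsMonotoneOperator A := by
  intro u v
  rw [← map_sub]
  exact hA.inner_nonneg_left (u - v)

theorem two_mul_inner_map_le (hA : A.IsPositive) (u v : E) :
    2 * ⟪A u, v⟫ ≤ ⟪A u, u⟫ + ⟪A v, v⟫ := by
  have h := hA.inner_nonneg_left (u - v)
  rw [map_sub, inner_sub_left, inner_sub_right, inner_sub_right, hA.isSymmetric v u,
    real_inner_comm (A u) v] at h
  linarith

theorem isMonotoneOperator_inner_map_self_smul (hA : A.IsPositive) :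
    IsMonotoneOperator (fun v ↦ ⟪A v, v⟫ • A v) := by
  intro u v
  have hcross := hA.two_mul_inner_map_le u v
  have hvu : ⟪A v, u⟫ = ⟪A u, v⟫ := by rw [hA.isSymmetric v u, real_inner_comm]
  rw [inner_sub_left, inner_sub_right, inner_sub_right, real_inner_smul_left,
    real_inner_smul_left, real_inner_smul_left, real_inner_smul_left, hvu]
  nlinarith [sq_nonneg (⟪A u, u⟫ - ⟪A v, v⟫), hA.inner_nonneg_left u, hA.inner_nonneg_left v]

end LinearMap.IsPositive

end

/-- Uniqueness part of Theorem 5.2 for the backward Euler scheme, via the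
monotonicity property of Lemma 2.6. -/
theorem backward_euler_uniqueness
    {V : Type*} [NormedAddCommGroup V] [InnerProductSpace ℝ V]
    (A : V →ₗ[ℝ] V)
    (hsymm : ∀ v w : V, (inner ℝ (A v) w : ℝ) = inner ℝ v (A w))
    (hpos : ∀ v : V, (0 : ℝ) ≤ inner ℝ (A v) v)
    (k : ℝ) (hk : 0 < k) (g : V)
    (W₁ W₂ : V)
    (h₁ : W₁ + (k * (1 + (inner ℝ (A W₁) W₁ : ℝ))) • A W₁ = g)
    (h₂ : W₂ + (k * (1 + (inner ℝ (A W₂) W₂ : ℝ))) • A W₂ = g) :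
    W₁ = W₂ := by
  have hA : A.IsPositive := (A.isPositive_iff).mpr ⟨hsymm, hpos⟩
  have hF : IsMonotoneOperator (fun v ↦ k • (A v + ⟪A v, v⟫ • A v)) :=
    (hA.isMonotoneOperator.add hA.isMonotoneOperator_inner_map_self_smul).const_smul hk.le
  have hrw : ∀ v, (k * (1 + ⟪A v, v⟫)) • A v = k • (A v + ⟪A v, v⟫ • A v) := fun v ↦ by
    rw [mul_smul, add_smul, one_smul]
  rw [hrw] at h₁ h₂
  exact hF.injective_id_add (h₁.trans h₂.symm)
end

section
/- Let E be a real normed vector space that is complete, let a < b be real numbers with k = b − a, and let g : ℝ → E be twice continuously differentiable on [a, b]. Then ‖g'(b) − (g(b) − g(a))/k‖² ≤ (k/3) ∫_a^b ‖g''(s)‖² ds. -/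
/-!
Integration by parts turns the consistency error into a weighted integral of the second derivative,
`k • g' b - (g b - g a) = ∫ s in a..b, (s - a) • g'' s`, and Cauchy–Schwarz against the weight
`∫ s in a..b, (s - a) ^ 2 = k ^ 3 / 3` gives the bound.
-/

open Set MeasureTheory
open scoped ENNReal

theorem ContinuousOn.memLp_restrict_of_isCompact {X F : Type*} [TopologicalSpace X] [T2Space X]
    [MeasurableSpace X] [OpensMeasurableSpace X] [NormedAddCommGroup F] {μ : Measure X}
    [IsFiniteMeasureOnCompacts μ] {s : Set X} {f : X → F} (hs : IsCompact s)
    (hf : ContinuousOn f s) (p : ℝ≥0∞) : MemLp f p (μ.restrict s) := by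
  obtain ⟨C, hC⟩ := hs.exists_bound_of_continuousOn hf
  have : IsFiniteMeasure (μ.restrict s) := isFiniteMeasure_restrict.2 hs.measure_lt_top.ne
  exact .of_bound (hf.aestronglyMeasurable_of_isCompact hs hs.measurableSet) C
    ((ae_restrict_iff' hs.measurableSet).2 (ae_of_all _ hC))

section CauchySchwarz

variable {α : Type*} [MeasurableSpace α] {μ : Measure α}

theorem sq_integral_norm_mul_norm_le {F G : Type*} [NormedAddCommGroup F] [NormedAddCommGroup G]
    {f : α → F} {g : α → G} (hf : MemLp f 2 μ) (hg : MemLp g 2 μ) :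
    (∫ x, ‖f x‖ * ‖g x‖ ∂μ) ^ 2 ≤ (∫ x, ‖f x‖ ^ 2 ∂μ) * ∫ x, ‖g x‖ ^ 2 ∂μ := by
  have two : ENNReal.ofReal 2 = 2 := by norm_num
  have holder := integral_mul_norm_le_Lp_mul_Lq Real.HolderConjugate.two_two
    (two ▸ hf.norm) (two ▸ hg.norm)
  simp only [norm_norm, Real.rpow_two, ← Real.sqrt_eq_rpow] at holder
  calc (∫ x, ‖f x‖ * ‖g x‖ ∂μ) ^ 2
      ≤ (√(∫ x, ‖f x‖ ^ 2 ∂μ) * √(∫ x, ‖g x‖ ^ 2 ∂μ)) ^ 2 :=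
        pow_le_pow_left₀ (MeasureTheory.integral_nonneg fun x ↦ by positivity) holder 2
    _ = (∫ x, ‖f x‖ ^ 2 ∂μ) * ∫ x, ‖g x‖ ^ 2 ∂μ := by
        rw [mul_pow, Real.sq_sqrt (MeasureTheory.integral_nonneg fun x ↦ by positivity),
          Real.sq_sqrt (MeasureTheory.integral_nonneg fun x ↦ by positivity)]

variable {E : Type*} [NormedAddCommGroup E] [NormedSpace ℝ E]

theorem sq_norm_integral_smul_le {f : α → ℝ} {g : α → E} (hf : MemLp f 2 μ) (hg : MemLp g 2 μ) :
    ‖∫ x, f x • g x ∂μ‖ ^ 2 ≤ (∫ x, f x ^ 2 ∂μ) * ∫ x, ‖g x‖ ^ 2 ∂μ := by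
  have hnorm : ‖∫ x, f x • g x ∂μ‖ ≤ ∫ x, ‖f x‖ * ‖g x‖ ∂μ := by
    simpa only [norm_smul] using norm_integral_le_integral_norm (fun x ↦ f x • g x)
  simpa only [Real.norm_eq_abs, sq_abs] using
    (pow_le_pow_left₀ (norm_nonneg _) hnorm 2).trans (sq_integral_norm_mul_norm_le hf hg)

theorem intervalIntegral.sq_norm_integral_smul_le {a b : ℝ} (hab : a ≤ b) {f : ℝ → ℝ}
    {g : ℝ → E} (hf : ContinuousOn f (Icc a b)) (hg : ContinuousOn g (Icc a b)) :
    ‖∫ x in a..b, f x • g x‖ ^ 2 ≤ (∫ x in a..b, f x ^ 2) * ∫ x in a..b, ‖g x‖ ^ 2 := by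
  have hIoc : volume.restrict (Ioc a b) ≤ volume.restrict (Icc a b) :=
    Measure.restrict_mono Ioc_subset_Icc_self le_rfl
  simp only [intervalIntegral.integral_of_le hab]
  exact _root_.sq_norm_integral_smul_le
    ((hf.memLp_restrict_of_isCompact isCompact_Icc 2).mono_measure hIoc)
    ((hg.memLp_restrict_of_isCompact isCompact_Icc 2).mono_measure hIoc)

end CauchySchwarz

theorem intervalIntegral.integral_sub_smul_eq_of_hasDerivWithinAt {E : Type*}
    [NormedAddCommGroup E] [NormedSpace ℝ E] [CompleteSpace E] {a b : ℝ} (hab : a ≤ b)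
    {g g' g'' : ℝ → E}
    (hg : ∀ t ∈ Icc a b, HasDerivWithinAt g (g' t) (Icc a b) t)
    (hg' : ∀ t ∈ Icc a b, HasDerivWithinAt g' (g'' t) (Icc a b) t)
    (hg'' : IntervalIntegrable g'' volume a b) :
    ∫ s in a..b, (s - a) • g'' s = (b - a) • g' b - (g b - g a) := by
  have hg'_int : IntervalIntegrable g' volume a b :=
    ContinuousOn.intervalIntegrable_of_Icc hab fun t ht ↦ (hg' t ht).continuousWithinAt
  have hftc : ∫ s in a..b, g' s = g b - g a :=
    intervalIntegral.integral_eq_sub_of_hasDeriv_right_of_le hab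
      (fun t ht ↦ (hg t ht).continuousWithinAt)
      (fun t ht ↦ ((hg t (Ioo_subset_Icc_self ht)).hasDerivAt
        (Icc_mem_nhds ht.1 ht.2)).hasDerivWithinAt) hg'_int
  rw [← uIcc_of_le hab] at hg'
  have hparts := intervalIntegral.integral_smul_deriv_eq_deriv_smul_of_hasDerivWithinAt
    (u := fun s ↦ s - a) (u' := fun _ ↦ (1 : ℝ))
    (fun t _ ↦ ((hasDerivAt_id t).sub_const a).hasDerivWithinAt) hg' intervalIntegrable_const hg''
  simpa only [sub_self, zero_smul, sub_zero, one_smul, hftc] using hparts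

/-- The Taylor-remainder estimate (ex2) for the backward Euler consistency error:
`‖g'(b) − (g(b) − g(a))/k‖² ≤ (k/3) ∫_a^b ‖g''(s)‖² ds` with `k = b − a`. -/
theorem taylor_remainder_estimate
    {E : Type*} [NormedAddCommGroup E] [NormedSpace ℝ E] [CompleteSpace E]
    (a b : ℝ) (hab : a < b) (k : ℝ) (hk : k = b - a)
    (g g' g'' : ℝ → E)
    (hg : ∀ t ∈ Icc a b, HasDerivWithinAt g (g' t) (Icc a b) t)
    (hg' : ∀ t ∈ Icc a b, HasDerivWithinAt g' (g'' t) (Icc a b) t)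
    (hg'' : ContinuousOn g'' (Icc a b)) :
    ‖g' b - (1 / k) • (g b - g a)‖ ^ 2 ≤ (k / 3) * ∫ s in a..b, ‖g'' s‖ ^ 2 := by
  have hk0 : 0 < k := by rw [hk]; linarith
  have hremainder : g' b - (1 / k) • (g b - g a) = (1 / k) • ∫ s in a..b, (s - a) • g'' s := by
    rw [intervalIntegral.integral_sub_smul_eq_of_hasDerivWithinAt hab.le hg hg'
      (hg''.intervalIntegrable_of_Icc hab.le), ← hk, smul_sub (1 / k) (k • g' b), smul_smul,
      one_div_mul_cancel hk0.ne', one_smul]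
  have hweight : ∫ s in a..b, (s - a) ^ 2 = k ^ 3 / 3 := by
    norm_num [intervalIntegral.integral_comp_sub_right fun s ↦ s ^ 2, ← hk]
  have hCS := intervalIntegral.sq_norm_integral_smul_le hab.le
    (continuous_sub_right a).continuousOn hg''
  rw [hweight] at hCS
  rw [hremainder, norm_smul, mul_pow, Real.norm_of_nonneg (by positivity)]
  calc (1 / k) ^ 2 * ‖∫ s in a..b, (s - a) • g'' s‖ ^ 2
      ≤ (1 / k) ^ 2 * (k ^ 3 / 3 * ∫ s in a..b, ‖g'' s‖ ^ 2) := by gcongr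
    _ = k / 3 * ∫ s in a..b, ‖g'' s‖ ^ 2 := by field_simp
end
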